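/- arXiv:1505.02185 — 3 statements merged into one kernel-verified Lean document; each statement's English description precedes it below -/
import Mathlib

section
/- Fix an integer N₀≥0. Let f:ℝ^n→[0,∞) be continuous, let ν>0 and n/(n+ν)<r≤1. Then there is a constant C=C(n,ν,r,N₀) such that for all j,k∈ℤ and all x∈ℝ^n: Σ_{z∈ℤ^n} 2^{-(j+N₀)n} Φ_{min(j,k)}^{n+ν}(x−c_{j,z}) f(c_{j,z}) ≤ C·2^{ν·max(0,j−k)}·( M[(Σ_{z∈ℤ^n} f(c_{j,z}) χ_{Q_{j,z}})^r](x) )^{1/r}, where the inequality is understood in [0,∞]. -/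
noncomputable section

open MeasureTheory Filter Topology SchwartzMap Metric
open scoped ENNReal NNReal

abbrev Rn (n : ℕ) : Type := EuclideanSpace ℝ (Fin n)

namespace HL

variable {n : ℕ}

/-- The order `|α|` of a multi-index `α`. -/
def mord (α : Fin n → ℕ) : ℕ := ∑ i, α i

/-- The monomial `x^α`. -/
def mono (α : Fin n → ℕ) (x : Rn n) : ℝ := ∏ i, x i ^ α i

/-- Partial derivative in the `i`-th coordinate direction. -/
def pd1 {F : Type*} [NormedAddCommGroup F] [NormedSpace ℝ F] (i : Fin n) (f : Rn n → F) :
    Rn n → F := fun x => fderiv ℝ f x (EuclideanSpace.single i 1)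

/-- Iterated partial derivatives along a list of coordinates. -/
def pdL {F : Type*} [NormedAddCommGroup F] [NormedSpace ℝ F] :
    List (Fin n) → (Rn n → F) → Rn n → F
  | [], f => f
  | i :: l, f => pd1 i (pdL l f)

/-- The multi-index partial derivative `∂^α`. -/
def pdA {F : Type*} [NormedAddCommGroup F] [NormedSpace ℝ F] (α : Fin n → ℕ) (f : Rn n → F) :
    Rn n → F :=
  pdL ((List.finRange n).flatMap fun i => List.replicate (α i) i) f

/-- `Φ_k^N(x) = 2^{kn} (1 + 2^k |x|)^{-N}`. -/
def Phi (k : ℤ) (N : ℝ) (x : Rn n) : ℝ :=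
  (2:ℝ) ^ (k * n) * (1 + (2:ℝ) ^ k * ‖x‖) ^ (-N)

/-- The `L¹`-normalized dilation `h_k(u) = 2^{kn} h(2^k u)` (complex valued). -/
def dil (h : Rn n → ℂ) (k : ℤ) (u : Rn n) : ℂ :=
  Complex.ofReal ((2:ℝ) ^ (k * n)) * h ((2:ℝ) ^ k • u)

/-- The `L¹`-normalized dilation `h_k(u) = 2^{kn} h(2^k u)` (real valued). -/
def dilR (h : Rn n → ℝ) (k : ℤ) (u : Rn n) : ℝ :=
  (2:ℝ) ^ (k * n) * h ((2:ℝ) ^ k • u)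

/-- The class `LPSO(N, L+δ)` of Littlewood-Paley-Stein kernels with constant `C`. -/
structure IsLPSO (lam : ℤ → Rn n → Rn n → ℂ) (N : ℝ) (L : ℕ) (δ C : ℝ) : Prop where
  size : ∀ (k : ℤ) (x y : Rn n), ‖lam k x y‖ ≤ C * Phi k N (x - y)
  deriv_size : ∀ (α : Fin n → ℕ), mord α ≤ L → ∀ (k : ℤ) (x y : Rn n),
    ‖pdA α (lam k x) y‖ ≤ C * (2:ℝ) ^ (k * (mord α : ℤ)) * Phi k N (x - y)
  deriv_holder : ∀ (α : Fin n → ℕ), mord α = L → ∀ (k : ℤ) (x y y' : Rn n),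
    ‖pdA α (lam k x) y - pdA α (lam k x) y'‖ ≤
      C * ‖y - y'‖ ^ δ * (2:ℝ) ^ ((k : ℝ) * (L + δ)) * (Phi k N (x - y) + Phi k N (x - y'))

/-- The moment function `[[Λ_k]]_α(x) = 2^{k|α|} ∫ λ_k(x,y) (x-y)^α dy`. -/
def mmt (lam : ℤ → Rn n → Rn n → ℂ) (α : Fin n → ℕ) (k : ℤ) (x : Rn n) : ℂ :=
  Complex.ofReal ((2:ℝ) ^ (k * (mord α : ℤ))) * ∫ y, lam k x y * Complex.ofReal (mono α (x - y))

/-- The square function `S_Λ f`. -/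
def sqFn (lam : ℤ → Rn n → Rn n → ℂ) (f : Rn n → ℂ) (x : Rn n) : ℝ≥0∞ :=
  (∑' k : ℤ, (‖∫ y, lam k x y * f y‖₊ : ℝ≥0∞) ^ 2) ^ ((1:ℝ)/2)

/-- The nontangential maximal function `𝒩^φ f`. -/
def ntMax (φ : Rn n → ℝ) (f : Rn n → ℂ) (x : Rn n) : ℝ≥0∞ :=
  ⨆ (t : ℝ) (_ : 0 < t) (y : Rn n) (_ : ‖x - y‖ ≤ t),
    (‖∫ u, Complex.ofReal ((t ^ n)⁻¹ * φ (t⁻¹ • (y - u))) * f u‖₊ : ℝ≥0∞)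

/-- The axis-parallel cube with corner `a` and side length `l`. -/
def cube (a : Rn n) (l : ℝ) : Set (Rn n) := {y | ∀ i, a i ≤ y i ∧ y i ≤ a i + l}

open Classical in
/-- The Carleson condition with constant `A` for a family of nonnegative functions. -/
def CarlesonCond (μ : ℤ → Rn n → ℝ) (A : ℝ) : Prop :=
  ∀ (a : Rn n) (l : ℝ), 0 < l →
    (∑' k : ℤ, if (2:ℝ) ^ (-k) ≤ l then ∫⁻ x in cube a l, ENNReal.ofReal (μ k x) else 0)
      ≤ ENNReal.ofReal (A * l ^ n)

/-- Mixed partial derivatives `∂_x^α ∂_y^β K(x,y)` of a kernel. -/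
def pdK (α β : Fin n → ℕ) (K : Rn n → Rn n → ℂ) (x y : Rn n) : ℂ :=
  pdA α (fun x' => pdA β (K x') y) x

/-- The Calderón-Zygmund kernel bounds `CZ(M+γ)` with constant `C`. -/
structure IsCZKernel (K : Rn n → Rn n → ℂ) (M : ℕ) (γ C : ℝ) : Prop where
  size : ∀ (α β : Fin n → ℕ), mord α ≤ M → mord β ≤ M → ∀ x y : Rn n, x ≠ y →
    ‖pdK α β K x y‖ ≤ C * ‖x - y‖ ^ (-((n : ℝ) + mord α + mord β))
  holder_x : ∀ (α β : Fin n → ℕ), mord α = M → mord β ≤ M → ∀ x x' y : Rn n, x ≠ y →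
    ‖x - x'‖ < ‖x - y‖ / 2 →
    ‖pdK α β K x y - pdK α β K x' y‖ ≤
      C * ‖x - x'‖ ^ γ * ‖x - y‖ ^ (-((n : ℝ) + M + mord β + γ))
  holder_y : ∀ (α β : Fin n → ℕ), mord α ≤ M → mord β = M → ∀ x y y' : Rn n, x ≠ y →
    ‖y - y'‖ < ‖x - y‖ / 2 →
    ‖pdK α β K x y - pdK α β K x y'‖ ≤
      C * ‖y - y'‖ ^ γ * ‖x - y‖ ^ (-((n : ℝ) + mord α + M + γ))

open Classical in
/-- Interpret a plain function as a Schwartz function (junk value `0` if it is not Schwartz). -/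
def toS (g : Rn n → ℂ) : 𝓢(Rn n, ℂ) :=
  if h : ∃ φ : 𝓢(Rn n, ℂ), ⇑φ = g then h.choose else 0

/-- `T ∈ CZO(M+γ)` with kernel `K` and constant `C`. -/
structure IsCZO (T : 𝓢(Rn n, ℂ) →L[ℂ] 𝓢(Rn n, ℂ) →L[ℂ] ℂ)
    (M : ℕ) (γ : ℝ) (K : Rn n → Rn n → ℂ) (C : ℝ) : Prop where
  kernel : IsCZKernel K M γ C
  rep : ∀ f g : 𝓢(Rn n, ℂ), HasCompactSupport (⇑f) → HasCompactSupport (⇑g) →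
    Disjoint (tsupport (⇑f)) (tsupport (⇑g)) →
    T f g = ∫ x, (∫ y, K x y * f y) * g x

/-- `T` is bounded on `L²` with constant `C`: `|⟨Tf,g⟩| ≤ C ‖f‖₂ ‖g‖₂`. -/
def L2Bounded (T : 𝓢(Rn n, ℂ) →L[ℂ] 𝓢(Rn n, ℂ) →L[ℂ] ℂ) (C : ℝ) : Prop :=
  ∀ f g : 𝓢(Rn n, ℂ),
    (‖T f g‖₊ : ℝ≥0∞) ≤ ENNReal.ofReal C * eLpNorm (⇑f) 2 volume * eLpNorm (⇑g) 2 volume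

/-- `ψ ∈ 𝒟_M`: smooth, compactly supported, with vanishing moments up to order `M`. -/
def InD (M : ℕ) (ψ : Rn n → ℂ) : Prop :=
  ContDiff ℝ (⊤ : ℕ∞) ψ ∧ HasCompactSupport ψ ∧
    ∀ α : Fin n → ℕ, mord α ≤ M → ∫ x, ψ x * Complex.ofReal (mono α x) = 0

/-- A fixed cutoff function `η`. -/
structure IsEta (η : Rn n → ℝ) : Prop where
  smooth : ContDiff ℝ (⊤ : ℕ∞) η
  compact : HasCompactSupport η
  nonneg : ∀ x, 0 ≤ η x
  le_one : ∀ x, η x ≤ 1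
  eq_one : ∀ x : Rn n, ‖x‖ ≤ 1 → η x = 1
  supp : tsupport η ⊆ Metric.ball 0 2

/-- `T^*(x^α) = 0` in `𝒟_M'` for all `|α| ≤ L`. -/
def TstarVanish (T : 𝓢(Rn n, ℂ) →L[ℂ] 𝓢(Rn n, ℂ) →L[ℂ] ℂ) (η : Rn n → ℝ) (M L : ℕ) : Prop :=
  ∀ α : Fin n → ℕ, mord α ≤ L → ∀ ψ : Rn n → ℂ, InD M ψ →
    Tendsto (fun R : ℝ => T (toS ψ)
      (toS fun x => Complex.ofReal (η (R⁻¹ • x)) * Complex.ofReal (mono α x))) atTop (𝓝 0)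

/-- The truncated approximations to the moment pairing `⟨[[T]]_α, ψ⟩`. -/
def momApprox (T : 𝓢(Rn n, ℂ) →L[ℂ] 𝓢(Rn n, ℂ) →L[ℂ] ℂ) (η : Rn n → ℝ)
    (α : Fin n → ℕ) (ψ : Rn n → ℂ) (R : ℝ) : ℂ :=
  ∑ β ∈ Fintype.piFinset (fun i => Finset.range (α i + 1)),
    ((∏ i, (α i).choose (β i) : ℕ) : ℂ) * (-1 : ℂ) ^ (mord α - mord β) *
      T (toS fun x => Complex.ofReal (η (R⁻¹ • x)) * Complex.ofReal (mono (α - β) x))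
        (toS fun x => Complex.ofReal (mono β x) * ψ x)

/-- The moment pairing `⟨[[T]]_α, ψ⟩`. -/
def momPair (T : 𝓢(Rn n, ℂ) →L[ℂ] 𝓢(Rn n, ℂ) →L[ℂ] ℂ) (η : Rn n → ℝ)
    (α : Fin n → ℕ) (ψ : Rn n → ℂ) : ℂ :=
  limUnder atTop (momApprox T η α ψ)

/-- The pairing `⟨T G_α^x, θ⟩` where `G_α^x(u) = (u-x)^α`. -/
def TGpair (T : 𝓢(Rn n, ℂ) →L[ℂ] 𝓢(Rn n, ℂ) →L[ℂ] ℂ) (η : Rn n → ℝ)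
    (α : Fin n → ℕ) (x : Rn n) (θ : Rn n → ℂ) : ℂ :=
  limUnder atTop (fun R : ℝ =>
    T (toS fun u => Complex.ofReal (η (R⁻¹ • u)) * Complex.ofReal (mono α (u - x))) (toS θ))

/-- The nontangential maximal function of a tempered distribution. -/
def ntDist (φ : Rn n → ℝ) (u : 𝓢(Rn n, ℂ) →L[ℂ] ℂ) (x : Rn n) : ℝ≥0∞ :=
  ⨆ (t : ℝ) (_ : 0 < t) (y : Rn n) (_ : ‖x - y‖ ≤ t),
    (‖u (toS fun v => Complex.ofReal ((t ^ n)⁻¹ * φ (t⁻¹ • (y - v))))‖₊ : ℝ≥0∞)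

/-- The paraproduct-corrected kernels `λ_k^{(m)}`. -/
def lamRec (lam : ℤ → Rn n → Rn n → ℂ) (φ : Rn n → ℝ) : ℕ → ℤ → Rn n → Rn n → ℂ
  | 0 => fun k x y => lam k x y - mmt lam 0 k x * Complex.ofReal (dilR φ k (x - y))
  | (m+1) => fun k x y => lamRec lam φ m k x y -
      ∑ α ∈ Finset.Nat.antidiagonalTuple n (m+1),
        (mmt (lamRec lam φ m) α k x / ((∏ i, Nat.factorial (α i) : ℕ) : ℂ)) *
          Complex.ofReal (dilR (pdA α φ) k (x - y))

open Classical in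
/-- The coefficients `M_{α,β}`. -/
def Mcoef (φ : Rn n → ℝ) (α β : Fin n → ℕ) : ℝ :=
  if ∀ i, α i ≤ β i then
    (-1:ℝ) ^ (mord β - mord α) *
      (((∏ i, (β i).factorial : ℕ) : ℝ) / ((∏ i, (β i - α i).factorial : ℕ) : ℝ)) *
      ∫ y, φ y * mono (β - α) y
  else 0

/-- Sum over all multi-indices of order at most `L`. -/
def sumIdx {X : Type*} [AddCommMonoid X] (L : ℕ) (F : (Fin n → ℕ) → X) : X :=
  ∑ m ∈ Finset.range (L+1), ∑ α ∈ Finset.Nat.antidiagonalTuple n m, F α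

/-- Center of the dyadic cube `Q_{j,z}` of side length `2^{-(j+N₀)}`. -/
def dyCenter (N₀ : ℕ) (j : ℤ) (z : Fin n → ℤ) : Rn n :=
  WithLp.toLp 2 (fun i => (2:ℝ) ^ (-(j + (N₀ : ℤ))) * ((z i : ℝ) + 1/2))

/-- The dyadic cube `Q_{j,z} = 2^{-(j+N₀)}(z + [0,1)^n)`. -/
def dyCube (N₀ : ℕ) (j : ℤ) (z : Fin n → ℤ) : Set (Rn n) :=
  {y | ∀ i, (2:ℝ) ^ (-(j + (N₀ : ℤ))) * (z i : ℝ) ≤ y i ∧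
    y i < (2:ℝ) ^ (-(j + (N₀ : ℤ))) * ((z i : ℝ) + 1)}

/-- The centered Hardy-Littlewood maximal operator (ℝ≥0∞-valued). -/
def HLM (g : Rn n → ℝ≥0∞) (x : Rn n) : ℝ≥0∞ :=
  ⨆ (R : ℝ) (_ : 0 < R), (volume (ball x R))⁻¹ * ∫⁻ u in ball x R, g u

/-- The convolution `P_k f = φ_k * f` with a real kernel `φ`. -/
def convK (φ : Rn n → ℝ) (k : ℤ) (f : Rn n → ℂ) (x : Rn n) : ℂ :=
  ∫ u, Complex.ofReal (dilR φ k (x - u)) * f u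

/-- The convolution `h_j * g` with a complex kernel `h`. -/
def QQ (h : Rn n → ℂ) (j : ℤ) (g : Rn n → ℂ) (x : Rn n) : ℂ :=
  ∫ u, dil h j (x - u) * g u

/-- The BMO seminorm (ℝ≥0∞-valued). -/
def bmoNorm (β : Rn n → ℂ) : ℝ≥0∞ :=
  ⨆ (a : Rn n) (l : ℝ) (_ : 0 < l),
    (volume (cube a l))⁻¹ * ∫⁻ x in cube a l, (‖β x - ⨍ y in cube a l, β y‖₊ : ℝ≥0∞)


lemma tsum_rpow_le {ι : Type*} [Countable ι] (a : ι → ℝ≥0∞) {r : ℝ} (hr0 : 0 < r) (hr1 : r ≤ 1) :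
    (∑' i, a i) ^ r ≤ ∑' i, a i ^ r := by
  have key : ∀ s : Finset ι, (∑ i ∈ s, a i) ^ r ≤ ∑' i, a i ^ r := by
    intro s
    refine le_trans ?_ (ENNReal.sum_le_tsum s)
    induction s using Finset.cons_induction with
    | empty => simp [ENNReal.zero_rpow_of_pos hr0]
    | cons i s hi ih =>
      rw [Finset.sum_cons, Finset.sum_cons]
      exact (ENNReal.rpow_add_le_add_rpow _ _ hr0.le hr1).trans (add_le_add le_rfl ih)
  have h2 : ∑' i, a i ≤ (∑' i, a i ^ r) ^ (1/r) := by
    rw [ENNReal.tsum_eq_iSup_sum]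
    refine iSup_le fun s => ?_
    have h3 := ENNReal.rpow_le_rpow (key s) (by positivity : (0:ℝ) ≤ 1/r)
    rwa [← ENNReal.rpow_mul, mul_one_div, div_self hr0.ne', ENNReal.rpow_one] at h3
  have h4 := ENNReal.rpow_le_rpow h2 hr0.le
  rwa [← ENNReal.rpow_mul, one_div, inv_mul_cancel₀ hr0.ne', ENNReal.rpow_one] at h4

lemma dyCube_eq_preimage (N₀ : ℕ) (j : ℤ) (z : Fin n → ℤ) :
    dyCube N₀ j z = (MeasurableEquiv.toLp 2 (Fin n → ℝ)).symm ⁻¹'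
      (Set.univ.pi fun i => Set.Ico ((2:ℝ) ^ (-(j + (N₀:ℤ))) * (z i : ℝ))
        ((2:ℝ) ^ (-(j + (N₀:ℤ))) * ((z i : ℝ) + 1))) := by
  ext y
  simp [dyCube, Set.mem_pi, MeasurableEquiv.coe_toLp_symm, Set.mem_Ico]

lemma measurableSet_dyCube (N₀ : ℕ) (j : ℤ) (z : Fin n → ℤ) :
    MeasurableSet (dyCube N₀ j z) := by
  rw [dyCube_eq_preimage]
  exact (MeasurableEquiv.toLp 2 (Fin n → ℝ)).symm.measurable
    (MeasurableSet.univ_pi fun i => measurableSet_Ico)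

lemma volume_dyCube (N₀ : ℕ) (j : ℤ) (z : Fin n → ℤ) :
    volume (dyCube N₀ j z) = ENNReal.ofReal (((2:ℝ) ^ (-(j + (N₀:ℤ)))) ^ n) := by
  have hs : (0:ℝ) < (2:ℝ) ^ (-(j + (N₀:ℤ))) := by positivity
  rw [dyCube_eq_preimage,
    (EuclideanSpace.volume_preserving_symm_measurableEquiv_toLp (Fin n)).measure_preimage
      ((MeasurableSet.univ_pi fun i => measurableSet_Ico).nullMeasurableSet),
    volume_pi_pi]
  have : ∀ i : Fin n, volume (Set.Ico ((2:ℝ) ^ (-(j + (N₀:ℤ))) * (z i : ℝ))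
      ((2:ℝ) ^ (-(j + (N₀:ℤ))) * ((z i : ℝ) + 1))) = ENNReal.ofReal ((2:ℝ) ^ (-(j + (N₀:ℤ)))) := by
    intro i
    rw [Real.volume_Ico]
    congr 1
    ring
  simp only [this, Finset.prod_const, Finset.card_univ, Fintype.card_fin]
  rw [← ENNReal.ofReal_pow hs.le]

lemma dyCenter_mem_dyCube (N₀ : ℕ) (j : ℤ) (z : Fin n → ℤ) :
    dyCenter N₀ j z ∈ dyCube N₀ j z := by
  intro i
  have hs : (0:ℝ) < (2:ℝ) ^ (-(j + (N₀:ℤ))) := by positivity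
  constructor
  · have : (z i : ℝ) ≤ (z i : ℝ) + 1/2 := by linarith
    exact mul_le_mul_of_nonneg_left this hs.le
  · have : (z i : ℝ) + 1/2 < (z i : ℝ) + 1 := by linarith
    exact mul_lt_mul_of_pos_left this hs

lemma norm_sub_dyCenter_le {N₀ : ℕ} {j : ℤ} {z : Fin n → ℤ} {u : Rn n}
    (hu : u ∈ dyCube N₀ j z) :
    ‖u - dyCenter N₀ j z‖ ≤ Real.sqrt n * (2:ℝ) ^ (-(j + (N₀:ℤ))) := by
  set s : ℝ := (2:ℝ) ^ (-(j + (N₀:ℤ))) with hs_def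
  have hs : (0:ℝ) < s := by positivity
  have hcoord : ∀ i, |u i - dyCenter N₀ j z i| ≤ s := by
    intro i
    have h1 := (hu i).1
    have h2 := (hu i).2
    have hc : dyCenter N₀ j z i = s * ((z i : ℝ) + 1/2) := rfl
    rw [abs_le, hc]
    constructor <;> nlinarith
  rw [EuclideanSpace.norm_eq]
  have hterm : ∀ i : Fin n, ‖(u - dyCenter N₀ j z) i‖ ^ 2 ≤ s ^ 2 := by
    intro i
    have happ : (u - dyCenter N₀ j z) i = u i - dyCenter N₀ j z i := rfl
    rw [happ, Real.norm_eq_abs]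
    exact pow_le_pow_left₀ (abs_nonneg _) (hcoord i) 2
  calc Real.sqrt (∑ i, ‖(u - dyCenter N₀ j z) i‖ ^ 2)
      ≤ Real.sqrt (∑ _i : Fin n, s ^ 2) :=
        Real.sqrt_le_sqrt (Finset.sum_le_sum fun i _ => hterm i)
    _ = Real.sqrt ((n : ℝ) * s ^ 2) := by
        rw [Finset.sum_const, Finset.card_univ, Fintype.card_fin, nsmul_eq_mul]
    _ = Real.sqrt n * s := by
        rw [Real.sqrt_mul (Nat.cast_nonneg n), Real.sqrt_sq hs.le]

lemma dyCube_disjoint (N₀ : ℕ) (j : ℤ) :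
    Pairwise (Function.onFun Disjoint (dyCube (n := n) N₀ j)) := by
  intro z z' hne
  rw [Function.onFun, Set.disjoint_left]
  intro y hy hy'
  apply hne
  funext i
  have hs : (0:ℝ) < (2:ℝ) ^ (-(j + (N₀:ℤ))) := by positivity
  have h1 : (z i : ℝ) < (z' i : ℝ) + 1 := by
    have := lt_of_le_of_lt (hy i).1 (hy' i).2
    exact (mul_lt_mul_iff_right₀ hs).mp this
  have h2 : (z' i : ℝ) < (z i : ℝ) + 1 := by
    have := lt_of_le_of_lt (hy' i).1 (hy i).2
    exact (mul_lt_mul_iff_right₀ hs).mp this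
  have h1' : z i < z' i + 1 := by exact_mod_cast h1
  have h2' : z' i < z i + 1 := by exact_mod_cast h2
  omega



lemma phi_nonneg (k : ℤ) (N : ℝ) (x : Rn n) : 0 ≤ Phi k N x := by
  unfold Phi
  have h1 : (0:ℝ) < (2:ℝ) ^ (k * (n:ℤ)) := by positivity
  have h2 : (0:ℝ) ≤ (1 + (2:ℝ) ^ k * ‖x‖) ^ (-N) := Real.rpow_nonneg (by positivity) _
  exact mul_nonneg h1.le h2

lemma phi_comparison {p : ℝ} (hp : 0 < p) {N₀ : ℕ} {j l : ℤ} (hl : l ≤ j + N₀)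
    {z : Fin n → ℤ} {x u : Rn n} (hu : u ∈ dyCube N₀ j z) :
    Phi l p (x - dyCenter N₀ j z) ≤ (1 + Real.sqrt n) ^ p * Phi l p (x - u) := by
  have h2l : (0:ℝ) < (2:ℝ) ^ l := by positivity
  set c := dyCenter N₀ j z with hc_def
  set A : ℝ := 1 + (2:ℝ) ^ l * ‖x - c‖ with hA
  set B : ℝ := 1 + (2:ℝ) ^ l * ‖x - u‖ with hB
  have hA0 : 0 < A := by positivity
  have hB0 : 0 < B := by positivity
  have hK0 : (0:ℝ) < 1 + Real.sqrt n := by positivity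
  have htri : ‖x - u‖ ≤ ‖x - c‖ + ‖u - c‖ := by
    have hxu : x - u = (x - c) - (u - c) := by abel
    rw [hxu]
    exact norm_sub_le _ _
  have hd : ‖u - c‖ ≤ Real.sqrt n * (2:ℝ) ^ (-(j + (N₀:ℤ))) := norm_sub_dyCenter_le hu
  have h2ls : (2:ℝ) ^ l * (2:ℝ) ^ (-(j + (N₀:ℤ))) ≤ 1 := by
    rw [← zpow_add₀ (two_ne_zero)]
    calc (2:ℝ) ^ (l + -(j + (N₀:ℤ))) ≤ (2:ℝ) ^ (0:ℤ) :=
          zpow_le_zpow_right₀ one_le_two (by omega)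
      _ = 1 := zpow_zero 2
  have hBA : B ≤ (1 + Real.sqrt n) * A := by
    have h1 : (2:ℝ) ^ l * ‖u - c‖ ≤ Real.sqrt n := by
      calc (2:ℝ)^l * ‖u - c‖ ≤ (2:ℝ)^l * (Real.sqrt n * (2:ℝ)^(-(j + (N₀:ℤ)))) :=
            mul_le_mul_of_nonneg_left hd h2l.le
        _ = Real.sqrt n * ((2:ℝ)^l * (2:ℝ)^(-(j+(N₀:ℤ)))) := by ring
        _ ≤ Real.sqrt n * 1 := mul_le_mul_of_nonneg_left h2ls (Real.sqrt_nonneg _)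
        _ = Real.sqrt n := mul_one _
    have h2 : (2:ℝ)^l * ‖x - u‖ ≤ (2:ℝ)^l * ‖x - c‖ + (2:ℝ)^l * ‖u - c‖ := by
      calc (2:ℝ)^l * ‖x - u‖ ≤ (2:ℝ)^l * (‖x - c‖ + ‖u - c‖) :=
            mul_le_mul_of_nonneg_left htri h2l.le
        _ = _ := by ring
    have h3 : 0 ≤ (2:ℝ)^l * ‖x - c‖ := by positivity
    rw [hA, hB]
    nlinarith [Real.sqrt_nonneg (n:ℝ)]
  have hmono : A ^ (-p) ≤ (1 + Real.sqrt n) ^ p * B ^ (-p) := by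
    have h3 : A⁻¹ ≤ (1 + Real.sqrt n) * B⁻¹ := by
      rw [← div_eq_mul_inv, le_div_iff₀ hB0, inv_mul_eq_div, div_le_iff₀ hA0]
      linarith
    calc A ^ (-p) = (A⁻¹) ^ p := by
          rw [Real.rpow_neg hA0.le, ← Real.inv_rpow hA0.le]
      _ ≤ ((1 + Real.sqrt n) * B⁻¹) ^ p :=
          Real.rpow_le_rpow (by positivity) h3 hp.le
      _ = (1 + Real.sqrt n) ^ p * B ^ (-p) := by
          rw [Real.mul_rpow hK0.le (by positivity), Real.inv_rpow hB0.le, ← Real.rpow_neg hB0.le]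
  show (2:ℝ) ^ (l * (n:ℤ)) * A ^ (-p) ≤ (1 + Real.sqrt n) ^ p * ((2:ℝ) ^ (l * (n:ℤ)) * B ^ (-p))
  have h2ln : (0:ℝ) ≤ (2:ℝ) ^ (l * (n:ℤ)) := by positivity
  calc (2:ℝ) ^ (l * (n:ℤ)) * A ^ (-p)
      ≤ (2:ℝ) ^ (l*(n:ℤ)) * ((1+Real.sqrt n)^p * B^(-p)) := mul_le_mul_of_nonneg_left hmono h2ln
    _ = _ := by ring

lemma lintegral_ball_le_HLM (hn : 1 ≤ n) (g : Rn n → ℝ≥0∞) (x : Rn n) {R : ℝ} (hR : 0 < R) :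
    ∫⁻ u in ball x R, g u ≤ ENNReal.ofReal (R ^ n) * volume (ball (0:Rn n) 1) * HLM g x := by
  haveI : Nontrivial (Rn n) :=
    Module.nontrivial_of_finrank_pos (R := ℝ) (by rw [finrank_euclideanSpace_fin]; omega)
  have hv : volume (ball x R) = ENNReal.ofReal (R ^ n) * volume (ball (0:Rn n) 1) := by
    rw [Measure.addHaar_ball volume x hR.le, finrank_euclideanSpace_fin]
  have hle : (volume (ball x R))⁻¹ * ∫⁻ u in ball x R, g u ≤ HLM g x := by
    have h1 : (volume (ball x R))⁻¹ * ∫⁻ u in ball x R, g u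
        ≤ ⨆ _ : 0 < R, (volume (ball x R))⁻¹ * ∫⁻ u in ball x R, g u :=
          le_iSup (fun _ : 0 < R => (volume (ball x R))⁻¹ * ∫⁻ u in ball x R, g u) hR
    exact h1.trans (le_iSup (fun R' : ℝ =>
      ⨆ _ : 0 < R', (volume (ball x R'))⁻¹ * ∫⁻ u in ball x R', g u) R)
  have h0 : volume (ball x R) ≠ 0 := (measure_ball_pos _ _ hR).ne'
  have ht : volume (ball x R) ≠ ⊤ := measure_ball_lt_top.ne
  calc ∫⁻ u in ball x R, g u
      = volume (ball x R) * ((volume (ball x R))⁻¹ * ∫⁻ u in ball x R, g u) := by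
        rw [← mul_assoc, ENNReal.mul_inv_cancel h0 ht, one_mul]
    _ ≤ volume (ball x R) * HLM g x := mul_le_mul_right hle _
    _ = _ := by rw [hv]

theorem stmt6 (n : ℕ) (hn : 1 ≤ n) (N₀ : ℕ) (f : Rn n → ℝ) (hfc : Continuous f)
    (hf0 : ∀ x, 0 ≤ f x) (ν : ℝ) (hν : 0 < ν) (r : ℝ)
    (hr1 : (n : ℝ) / ((n : ℝ) + ν) < r) (hr2 : r ≤ 1) :
    ∃ C : ℝ, 0 < C ∧ ∀ (j k : ℤ) (x : Rn n),
      (∑' z : Fin n → ℤ, ENNReal.ofReal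
          ((2:ℝ) ^ (-((j + (N₀:ℤ)) * n)) * Phi (min j k) ((n : ℝ) + ν) (x - dyCenter N₀ j z) *
            f (dyCenter N₀ j z)))
        ≤ ENNReal.ofReal C * ENNReal.ofReal ((2:ℝ) ^ (ν * ((max (j - k) 0 : ℤ) : ℝ)))
          * HLM (fun u => (∑' z : Fin n → ℤ,
              Set.indicator (dyCube N₀ j z) (fun _ => ENNReal.ofReal (f (dyCenter N₀ j z))) u)
              ^ r) x ^ ((1:ℝ)/r) := by
  classical
  have hn0 : (0:ℝ) < n := by exact_mod_cast hn
  set p : ℝ := (n:ℝ) + ν with hp_def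
  have hp : 0 < p := by positivity
  have hr0 : 0 < r := lt_trans (by positivity) hr1
  have hnrp : (n:ℝ) < r * p := by
    rw [div_lt_iff₀ hp] at hr1
    linarith
  set ε : ℝ := r * p - n with hε_def
  have hε : 0 < ε := by simp only [hε_def]; linarith
  set q : ℝ≥0∞ := ENNReal.ofReal ((2:ℝ) ^ (-ε)) with hq_def
  have hq1 : q < 1 := by
    rw [hq_def, ← ENNReal.ofReal_one]
    exact (ENNReal.ofReal_lt_ofReal_iff one_pos).mpr
      (Real.rpow_lt_one_of_one_lt_of_neg one_lt_two (neg_lt_zero.mpr hε))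
  have hG : (1 - q)⁻¹ ≠ ⊤ := by
    rw [Ne, ENNReal.inv_eq_top, tsub_eq_zero_iff_le]
    exact fun h => absurd h (not_le.mpr hq1)
  set V1 : ℝ≥0∞ := volume (ball (0 : Rn n) 1) with hV1_def
  have hV1 : V1 ≠ ⊤ := measure_ball_lt_top.ne
  set K1 : ℝ≥0∞ := ENNReal.ofReal ((1 + Real.sqrt n) ^ p) with hK1_def
  have hK1top : K1 ^ r ≠ ⊤ := ENNReal.rpow_ne_top_of_nonneg hr0.le ENNReal.ofReal_ne_top
  set E0 : ℝ≥0∞ := K1 ^ r * ENNReal.ofReal ((2:ℝ) ^ (p * r)) * V1 * (1 - q)⁻¹ with hE0_def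
  have hE0top : E0 ≠ ⊤ := by
    rw [hE0_def]
    exact ENNReal.mul_ne_top (ENNReal.mul_ne_top
      (ENNReal.mul_ne_top hK1top ENNReal.ofReal_ne_top) hV1) hG
  set D : ℝ≥0∞ := E0 ^ (1/r) * ENNReal.ofReal ((2:ℝ) ^ ((N₀:ℝ) * ν)) with hD_def
  have hDtop : D ≠ ⊤ := ENNReal.mul_ne_top
    (ENNReal.rpow_ne_top_of_nonneg (by positivity) hE0top) ENNReal.ofReal_ne_top
  refine ⟨D.toReal + 1, by positivity, fun j k x => ?_⟩
  set l : ℤ := min j k with hl_def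
  set J : ℤ := j + (N₀:ℤ) with hJ_def
  have hlJ : l ≤ J := by omega
  set g : Rn n → ℝ≥0∞ := fun u => (∑' z : Fin n → ℤ,
      Set.indicator (dyCube N₀ j z) (fun _ => ENNReal.ofReal (f (dyCenter N₀ j z))) u) ^ r
    with hg_def
  set W : Rn n → ℝ≥0∞ := fun u => (ENNReal.ofReal (Phi l p (x - u))) ^ r * g u with hW_def
  set F : (Fin n → ℤ) → ℝ≥0∞ := fun z =>
    ENNReal.ofReal ((2:ℝ) ^ (-(J * (n:ℤ))) * Phi l p (x - dyCenter N₀ j z) *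
      f (dyCenter N₀ j z)) with hF_def
  -- Step 1
  have step1 : (∑' z, F z) ≤ (∑' z, F z ^ r) ^ (1/r) := by
    calc (∑' z, F z) = ((∑' z, F z) ^ r) ^ (1/r) := by
          rw [← ENNReal.rpow_mul, mul_one_div, div_self hr0.ne', ENNReal.rpow_one]
      _ ≤ _ := ENNReal.rpow_le_rpow (tsum_rpow_le F hr0 hr2) (by positivity)
  -- basic facts
  have hmeas : ∀ z : Fin n → ℤ, MeasurableSet (dyCube (n := n) N₀ j z) := measurableSet_dyCube N₀ j
  have hcoef : (2:ℝ) ^ (-(J * (n:ℤ))) = ((2:ℝ) ^ (-J:ℤ)) ^ n := by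
    rw [← zpow_natCast ((2:ℝ) ^ (-J:ℤ)) n, ← zpow_mul]
    congr 1
    ring
  have hsn_rpow : ((2:ℝ) ^ (-J:ℤ)) ^ n = (2:ℝ) ^ (-(J:ℝ) * (n:ℝ)) := by
    rw [← Real.rpow_intCast (2:ℝ) (-J), ← Real.rpow_natCast ((2:ℝ) ^ ((-J:ℤ):ℝ)) n,
      ← Real.rpow_mul (by norm_num : (0:ℝ) ≤ 2)]
    congr 1
    push_cast
    ring
  have hvolQ : ∀ z : Fin n → ℤ, volume (dyCube N₀ j z) = ENNReal.ofReal ((2:ℝ) ^ (-(J:ℝ) * n)) := by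
    intro z
    rw [volume_dyCube, show -(j + (N₀:ℤ)) = -J from by rw [hJ_def]]
    exact congrArg ENNReal.ofReal hsn_rpow
  have hcomp : ∀ z : Fin n → ℤ, ∀ u ∈ dyCube N₀ j z,
      Phi l p (x - dyCenter N₀ j z) ≤ (1 + Real.sqrt n) ^ p * Phi l p (x - u) := by
    intro z u hu
    exact phi_comparison hp (by omega) hu
  -- Step 2
  have step2 : ∀ z : Fin n → ℤ, F z ^ r ≤
      (ENNReal.ofReal ((2:ℝ) ^ ((J:ℝ) * n * (1 - r))) * K1 ^ r) *
        ∫⁻ u in dyCube N₀ j z, W u ∂volume := by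
    intro z
    have hφ : 0 ≤ Phi l p (x - dyCenter N₀ j z) := phi_nonneg _ _ _
    have hfz : 0 ≤ f (dyCenter N₀ j z) := hf0 _
    have ha : (2:ℝ) ^ (-(J * (n:ℤ))) = (2:ℝ) ^ (-(J:ℝ) * n) := by rw [hcoef, hsn_rpow]
    have ha_r : ((2:ℝ) ^ (-(J:ℝ) * n)) ^ r
        = (2:ℝ) ^ ((J:ℝ) * n * (1-r)) * (2:ℝ) ^ (-(J:ℝ) * n) := by
      rw [← Real.rpow_mul (by norm_num : (0:ℝ) ≤ 2), ← Real.rpow_add two_pos]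
      congr 1
      ring
    have e1 : F z ^ r = ENNReal.ofReal ((2:ℝ) ^ ((J:ℝ) * n * (1 - r))) *
        (volume (dyCube N₀ j z) *
          (ENNReal.ofReal (Phi l p (x - dyCenter N₀ j z)) ^ r *
            ENNReal.ofReal (f (dyCenter N₀ j z)) ^ r)) := by
      calc F z ^ r
          = ENNReal.ofReal (((2:ℝ) ^ (-(J:ℝ)*n) * Phi l p (x - dyCenter N₀ j z) *
              f (dyCenter N₀ j z)) ^ r) := by
            simp only [hF_def]
            rw [ha, ENNReal.ofReal_rpow_of_nonneg
              (mul_nonneg (mul_nonneg (by positivity) hφ) hfz) hr0.le]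
        _ = ENNReal.ofReal (((2:ℝ) ^ (-(J:ℝ)*n)) ^ r * (Phi l p (x - dyCenter N₀ j z)) ^ r *
              (f (dyCenter N₀ j z)) ^ r) := by
            rw [Real.mul_rpow (by positivity) hfz, Real.mul_rpow (by positivity) hφ]
        _ = ENNReal.ofReal ((2:ℝ) ^ ((J:ℝ)*n*(1-r))) * (ENNReal.ofReal ((2:ℝ) ^ (-(J:ℝ)*n)) *
              (ENNReal.ofReal (Phi l p (x - dyCenter N₀ j z)) ^ r *
                ENNReal.ofReal (f (dyCenter N₀ j z)) ^ r)) := by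
            rw [ha_r, ENNReal.ofReal_rpow_of_nonneg hφ hr0.le,
              ENNReal.ofReal_rpow_of_nonneg hfz hr0.le,
              ← ENNReal.ofReal_mul (by positivity), ← ENNReal.ofReal_mul (by positivity),
              ← ENNReal.ofReal_mul (by positivity)]
            congr 1
            ring
        _ = _ := by rw [hvolQ z]
    rw [e1, mul_assoc (ENNReal.ofReal ((2:ℝ) ^ ((J:ℝ) * n * (1 - r)))) (K1 ^ r)]
    refine mul_le_mul' le_rfl ?_
    have hpt : ∀ u ∈ dyCube N₀ j z,
        ENNReal.ofReal (Phi l p (x - dyCenter N₀ j z)) ^ r *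
          ENNReal.ofReal (f (dyCenter N₀ j z)) ^ r ≤ K1 ^ r * W u := by
      intro u hu
      have h1 : ENNReal.ofReal (Phi l p (x - dyCenter N₀ j z)) ^ r
          ≤ K1 ^ r * ENNReal.ofReal (Phi l p (x - u)) ^ r := by
        have h2 := ENNReal.rpow_le_rpow (ENNReal.ofReal_le_ofReal (hcomp z u hu)) hr0.le
        rwa [ENNReal.ofReal_mul (by positivity), ENNReal.mul_rpow_of_nonneg _ _ hr0.le] at h2
      have h2 : ENNReal.ofReal (f (dyCenter N₀ j z)) ^ r ≤ g u := by
        simp only [hg_def]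
        refine ENNReal.rpow_le_rpow ?_ hr0.le
        refine le_trans ?_ (ENNReal.le_tsum z)
        rw [Set.indicator_of_mem hu]
      calc ENNReal.ofReal (Phi l p (x - dyCenter N₀ j z)) ^ r *
            ENNReal.ofReal (f (dyCenter N₀ j z)) ^ r
          ≤ (K1 ^ r * ENNReal.ofReal (Phi l p (x - u)) ^ r) * g u := mul_le_mul' h1 h2
        _ = K1 ^ r * W u := by rw [hW_def]; ring
    calc volume (dyCube N₀ j z) * (ENNReal.ofReal (Phi l p (x - dyCenter N₀ j z)) ^ r *
            ENNReal.ofReal (f (dyCenter N₀ j z)) ^ r)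
        = ∫⁻ _u in dyCube N₀ j z, (ENNReal.ofReal (Phi l p (x - dyCenter N₀ j z)) ^ r *
            ENNReal.ofReal (f (dyCenter N₀ j z)) ^ r) ∂volume := by
          rw [setLIntegral_const, mul_comm]
      _ ≤ ∫⁻ u in dyCube N₀ j z, K1 ^ r * W u ∂volume := setLIntegral_mono' (hmeas z) hpt
      _ = K1 ^ r * ∫⁻ u in dyCube N₀ j z, W u ∂volume := lintegral_const_mul' _ _ hK1top
  -- Step 3
  have step3 : ∑' z : Fin n → ℤ, ∫⁻ u in dyCube N₀ j z, W u ∂volume ≤ ∫⁻ u, W u ∂volume := by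
    rw [← lintegral_iUnion hmeas (dyCube_disjoint N₀ j)]
    exact setLIntegral_le_lintegral _ _
  -- Step 4 : annuli
  set ρ : ℕ → ℝ := fun m => (2:ℝ) ^ ((m:ℝ) - (l:ℝ)) with hρ_def
  have hρpos : ∀ m, 0 < ρ m := fun m => Real.rpow_pos_of_pos two_pos _
  set S : ℕ → Set (Rn n) := fun m =>
    Nat.casesOn m (ball x (ρ 0)) (fun m' => ball x (ρ (m'+1)) \ ball x (ρ m')) with hS_def
  have hSsub : ∀ m, S m ⊆ ball x (ρ m) := by
    intro m
    cases m with
    | zero => exact subset_rfl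
    | succ m' => exact Set.diff_subset
  have hSmeas : ∀ m, MeasurableSet (S m) := by
    intro m
    cases m with
    | zero => exact measurableSet_ball
    | succ m' => exact measurableSet_ball.diff measurableSet_ball
  have hcover : (Set.univ : Set (Rn n)) ⊆ ⋃ m, S m := by
    intro u _
    have hex : ∃ m : ℕ, u ∈ ball x (ρ m) := by
      obtain ⟨m, hm⟩ := pow_unbounded_of_one_lt ((2:ℝ) ^ ((l:ℝ)) * dist u x) one_lt_two
      refine ⟨m, ?_⟩
      rw [mem_ball]
      simp only [hρ_def]
      rw [Real.rpow_sub two_pos, lt_div_iff₀ (Real.rpow_pos_of_pos two_pos _)]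
      calc dist u x * (2:ℝ) ^ ((l:ℝ)) = (2:ℝ) ^ ((l:ℝ)) * dist u x := mul_comm _ _
        _ < (2:ℝ) ^ m := hm
        _ = (2:ℝ) ^ (m:ℝ) := (Real.rpow_natCast 2 m).symm
    by_cases h0 : Nat.find hex = 0
    · refine Set.mem_iUnion.mpr ⟨0, ?_⟩
      show u ∈ ball x (ρ 0)
      have hsp := Nat.find_spec hex
      rwa [h0] at hsp
    · obtain ⟨m', hm'⟩ : ∃ m', Nat.find hex = m' + 1 :=
        ⟨Nat.find hex - 1, (Nat.succ_pred_eq_of_pos (Nat.pos_of_ne_zero h0)).symm⟩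
      refine Set.mem_iUnion.mpr ⟨m' + 1, ?_⟩
      show u ∈ ball x (ρ (m'+1)) \ ball x (ρ m')
      refine ⟨hm' ▸ Nat.find_spec hex, ?_⟩
      exact Nat.find_min hex (by omega)
  have hSlow : ∀ m : ℕ, ∀ u ∈ S m, Phi l p (x - u) ≤ (2:ℝ) ^ ((l:ℝ)*n + p - (m:ℝ)*p) := by
    intro m u hu
    have hkey : (2:ℝ) ^ ((m:ℝ) - 1) ≤ 1 + (2:ℝ)^l * ‖x - u‖ := by
      cases m with
      | zero =>
        have h1 : (2:ℝ) ^ (((0:ℕ):ℝ) - 1) ≤ 1 :=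
          Real.rpow_le_one_of_one_le_of_nonpos one_le_two (by norm_num)
        have h2 : (0:ℝ) ≤ (2:ℝ)^l * ‖x - u‖ := by positivity
        linarith
      | succ m' =>
        have hu2 : ρ m' ≤ dist u x := by
          have hmem : u ∈ ball x (ρ (m'+1)) \ ball x (ρ m') := hu
          have := hmem.2
          rwa [mem_ball, not_lt] at this
        have hid : (2:ℝ) ^ ((((m'+1:ℕ)):ℝ) - 1) = (2:ℝ) ^ ((l:ℝ)) * ρ m' := by
          simp only [hρ_def]
          rw [← Real.rpow_add two_pos]
          congr 1
          push_cast
          ring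
        rw [hid]
        have hxu : dist u x = ‖x - u‖ := by rw [dist_comm, dist_eq_norm]
        have h2l_eq : (2:ℝ) ^ ((l:ℝ)) = (2:ℝ) ^ l := Real.rpow_intCast 2 l
        have hnn : (0:ℝ) ≤ (2:ℝ) ^ ((l:ℝ)) := (Real.rpow_pos_of_pos two_pos _).le
        calc (2:ℝ)^((l:ℝ)) * ρ m' ≤ (2:ℝ)^((l:ℝ)) * dist u x :=
              mul_le_mul_of_nonneg_left hu2 hnn
          _ = (2:ℝ)^l * ‖x - u‖ := by rw [h2l_eq, hxu]
          _ ≤ 1 + (2:ℝ)^l * ‖x - u‖ := by linarith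
    have h1 : (1 + (2:ℝ)^l*‖x-u‖) ^ (-p) ≤ ((2:ℝ)^((m:ℝ)-1)) ^ (-p) :=
      Real.rpow_le_rpow_of_nonpos (Real.rpow_pos_of_pos two_pos _) hkey (neg_nonpos.mpr hp.le)
    have h2 : (((2:ℝ)^((m:ℝ)-1)) : ℝ) ^ (-p) = (2:ℝ) ^ (p - (m:ℝ)*p) := by
      rw [← Real.rpow_mul (by norm_num : (0:ℝ) ≤ 2)]
      congr 1
      ring
    have h3 : (2:ℝ) ^ (l * (n:ℤ)) = (2:ℝ) ^ ((l:ℝ)*(n:ℝ)) := by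
      rw [← Real.rpow_intCast (2:ℝ) (l * (n:ℤ))]
      congr 1
      push_cast
      ring
    show (2:ℝ)^(l*(n:ℤ)) * (1 + (2:ℝ)^l*‖x - u‖)^(-p) ≤ _
    calc (2:ℝ)^(l*(n:ℤ)) * (1+(2:ℝ)^l*‖x-u‖)^(-p)
        ≤ (2:ℝ)^(l*(n:ℤ)) * (2:ℝ)^(p - (m:ℝ)*p) := by
          rw [← h2]
          exact mul_le_mul_of_nonneg_left h1 (by positivity)
      _ = (2:ℝ) ^ ((l:ℝ)*n + p - (m:ℝ)*p) := by
          rw [h3, ← Real.rpow_add two_pos]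
          congr 1
          ring
  have step4m : ∀ m : ℕ, ∫⁻ u in S m, W u ∂volume ≤
      (ENNReal.ofReal ((2:ℝ)^((l:ℝ)*n*(r-1))) * ENNReal.ofReal ((2:ℝ)^(p*r)) * V1) * q ^ m
        * HLM g x := by
    intro m
    have hsup : ∀ u ∈ S m, W u ≤ ENNReal.ofReal (((2:ℝ)^((l:ℝ)*n + p - (m:ℝ)*p))^r) * g u := by
      intro u hu
      refine mul_le_mul' ?_ le_rfl
      rw [← ENNReal.ofReal_rpow_of_nonneg (by positivity) hr0.le]
      exact ENNReal.rpow_le_rpow (ENNReal.ofReal_le_ofReal (hSlow m u hu)) hr0.le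
    have hconst : ENNReal.ofReal (((2:ℝ)^((l:ℝ)*n + p - (m:ℝ)*p))^r) * ENNReal.ofReal ((ρ m)^n)
        = ENNReal.ofReal ((2:ℝ)^((l:ℝ)*n*(r-1))) * ENNReal.ofReal ((2:ℝ)^(p*r)) * q ^ m := by
      rw [hq_def, ← ENNReal.ofReal_pow (by positivity),
        ← ENNReal.ofReal_mul (by positivity), ← ENNReal.ofReal_mul (by positivity),
        ← ENNReal.ofReal_mul (by positivity)]
      congr 1
      simp only [hρ_def]
      rw [← Real.rpow_natCast ((2:ℝ)^((m:ℝ)-(l:ℝ))) n, ← Real.rpow_natCast ((2:ℝ)^(-ε)) m,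
        ← Real.rpow_mul (by norm_num : (0:ℝ) ≤ 2), ← Real.rpow_mul (by norm_num : (0:ℝ) ≤ 2),
        ← Real.rpow_mul (by norm_num : (0:ℝ) ≤ 2),
        ← Real.rpow_add two_pos, ← Real.rpow_add two_pos, ← Real.rpow_add two_pos]
      congr 1
      rw [hε_def]
      ring
    calc ∫⁻ u in S m, W u ∂volume
        ≤ ∫⁻ u in S m, ENNReal.ofReal (((2:ℝ)^((l:ℝ)*n + p - (m:ℝ)*p))^r) * g u ∂volume :=
          setLIntegral_mono' (hSmeas m) hsup
      _ = ENNReal.ofReal (((2:ℝ)^((l:ℝ)*n+p-(m:ℝ)*p))^r) * ∫⁻ u in S m, g u ∂volume :=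
          lintegral_const_mul' _ _ ENNReal.ofReal_ne_top
      _ ≤ ENNReal.ofReal (((2:ℝ)^((l:ℝ)*n+p-(m:ℝ)*p))^r) * ∫⁻ u in ball x (ρ m), g u ∂volume :=
          mul_le_mul_right (lintegral_mono_set (hSsub m)) _
      _ ≤ ENNReal.ofReal (((2:ℝ)^((l:ℝ)*n+p-(m:ℝ)*p))^r) *
            (ENNReal.ofReal ((ρ m)^n) * V1 * HLM g x) :=
          mul_le_mul_right (lintegral_ball_le_HLM hn g x (hρpos m)) _
      _ = (ENNReal.ofReal (((2:ℝ)^((l:ℝ)*n+p-(m:ℝ)*p))^r) * ENNReal.ofReal ((ρ m)^n) * V1)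
            * HLM g x := by ring
      _ = _ := by rw [hconst]; ring
  have step4 : ∫⁻ u, W u ∂volume ≤
      ((ENNReal.ofReal ((2:ℝ)^((l:ℝ)*n*(r-1))) * ENNReal.ofReal ((2:ℝ)^(p*r)) * V1 * (1-q)⁻¹))
        * HLM g x := by
    have h1 : ∫⁻ u, W u ∂volume ≤ ∑' m : ℕ, ∫⁻ u in S m, W u ∂volume := by
      rw [← setLIntegral_univ]
      exact le_trans (lintegral_mono_set hcover) (lintegral_iUnion_le _ _)
    refine h1.trans ((ENNReal.tsum_le_tsum step4m).trans ?_)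
    have hre : ∀ m : ℕ,
        (ENNReal.ofReal ((2:ℝ)^((l:ℝ)*n*(r-1))) * ENNReal.ofReal ((2:ℝ)^(p*r)) * V1) * q ^ m
          * HLM g x
        = ((ENNReal.ofReal ((2:ℝ)^((l:ℝ)*n*(r-1))) * ENNReal.ofReal ((2:ℝ)^(p*r)) * V1)
            * HLM g x) * q ^ m := fun m => by ring
    rw [tsum_congr hre, ENNReal.tsum_mul_left, ENNReal.tsum_geometric]
    apply le_of_eq
    ring
  -- combine
  have hsum : (∑' z, F z ^ r) ≤
      ((ENNReal.ofReal ((2:ℝ)^((J:ℝ)*n*(1-r))) * ENNReal.ofReal ((2:ℝ)^((l:ℝ)*n*(r-1)))) * E0)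
        * HLM g x := by
    calc (∑' z, F z ^ r)
        ≤ ∑' z : Fin n → ℤ, (ENNReal.ofReal ((2:ℝ)^((J:ℝ)*n*(1-r))) * K1^r) *
            ∫⁻ u in dyCube N₀ j z, W u ∂volume := ENNReal.tsum_le_tsum step2
      _ = (ENNReal.ofReal ((2:ℝ)^((J:ℝ)*n*(1-r))) * K1^r) *
            ∑' z : Fin n → ℤ, ∫⁻ u in dyCube N₀ j z, W u ∂volume := ENNReal.tsum_mul_left
      _ ≤ (ENNReal.ofReal ((2:ℝ)^((J:ℝ)*n*(1-r))) * K1^r) * ∫⁻ u, W u ∂volume :=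
          mul_le_mul_right step3 _
      _ ≤ (ENNReal.ofReal ((2:ℝ)^((J:ℝ)*n*(1-r))) * K1^r) *
            ((ENNReal.ofReal ((2:ℝ)^((l:ℝ)*n*(r-1))) * ENNReal.ofReal ((2:ℝ)^(p*r)) * V1
              * (1-q)⁻¹) * HLM g x) := mul_le_mul_right step4 _
      _ = _ := by rw [hE0_def]; ring
  have main1 : (∑' z, F z) ≤
      ((ENNReal.ofReal ((2:ℝ)^((J:ℝ)*n*(1-r))) * ENNReal.ofReal ((2:ℝ)^((l:ℝ)*n*(r-1)))) ^ (1/r)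
        * E0 ^ (1/r)) * HLM g x ^ (1/r) := by
    refine step1.trans ?_
    refine le_trans (ENNReal.rpow_le_rpow hsum (by positivity)) ?_
    rw [ENNReal.mul_rpow_of_nonneg _ _ (by positivity : (0:ℝ) ≤ 1/r),
      ENNReal.mul_rpow_of_nonneg _ _ (by positivity : (0:ℝ) ≤ 1/r)]
  have hXY : (ENNReal.ofReal ((2:ℝ)^((J:ℝ)*n*(1-r))) * ENNReal.ofReal ((2:ℝ)^((l:ℝ)*n*(r-1))))
        ^ (1/r)
      ≤ ENNReal.ofReal ((2:ℝ)^((N₀:ℝ)*ν)) *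
          ENNReal.ofReal ((2:ℝ)^(ν * ((max (j-k) 0 : ℤ):ℝ))) := by
    rw [← ENNReal.ofReal_mul (by positivity), ← Real.rpow_add two_pos,
      ENNReal.ofReal_rpow_of_nonneg (by positivity) (by positivity),
      ← Real.rpow_mul (by norm_num : (0:ℝ) ≤ 2),
      ← ENNReal.ofReal_mul (by positivity), ← Real.rpow_add two_pos]
    apply ENNReal.ofReal_le_ofReal
    apply Real.rpow_le_rpow_of_exponent_le one_le_two
    have hJl : (J:ℝ) - (l:ℝ) = (N₀:ℝ) + ((max (j-k) 0 : ℤ):ℝ) := by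
      have hz : J - l = (N₀:ℤ) + max (j-k) 0 := by omega
      exact_mod_cast hz
    have hmax0 : (0:ℝ) ≤ ((max (j-k) 0 : ℤ):ℝ) := by exact_mod_cast le_max_right (j-k) 0
    have hexp : (n:ℝ) * (1-r) / r ≤ ν := by
      rw [div_le_iff₀ hr0]
      nlinarith
    have e2 : ((J:ℝ)*n*(1-r) + (l:ℝ)*n*(r-1)) * (1/r) = ((J:ℝ)-(l:ℝ)) * ((n:ℝ)*(1-r)/r) := by
      field_simp
      ring
    rw [e2, hJl]
    calc ((N₀:ℝ) + ((max (j-k) 0 : ℤ):ℝ)) * ((n:ℝ)*(1-r)/r)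
        ≤ ((N₀:ℝ) + ((max (j-k) 0 : ℤ):ℝ)) * ν := by
          refine mul_le_mul_of_nonneg_left hexp (by positivity)
      _ = (N₀:ℝ)*ν + ν * ((max (j-k) 0 : ℤ):ℝ) := by ring
  calc (∑' z, F z)
      ≤ ((ENNReal.ofReal ((2:ℝ)^((J:ℝ)*n*(1-r))) * ENNReal.ofReal ((2:ℝ)^((l:ℝ)*n*(r-1))))
          ^ (1/r) * E0 ^ (1/r)) * HLM g x ^ (1/r) := main1
    _ ≤ ((ENNReal.ofReal ((2:ℝ)^((N₀:ℝ)*ν)) *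
          ENNReal.ofReal ((2:ℝ)^(ν * ((max (j-k) 0 : ℤ):ℝ)))) * E0 ^ (1/r)) * HLM g x ^ (1/r) :=
        mul_le_mul_left (mul_le_mul_left hXY _) _
    _ = (D * ENNReal.ofReal ((2:ℝ)^(ν * ((max (j-k) 0 : ℤ):ℝ)))) * HLM g x ^ (1/r) := by
        rw [hD_def]
        ring
    _ ≤ (ENNReal.ofReal (D.toReal + 1) *
          ENNReal.ofReal ((2:ℝ)^(ν * ((max (j-k) 0 : ℤ):ℝ)))) * HLM g x ^ (1/r) := by
        refine mul_le_mul_left (mul_le_mul_left ?_ _) _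
        calc D = ENNReal.ofReal D.toReal := (ENNReal.ofReal_toReal hDtop).symm
          _ ≤ ENNReal.ofReal (D.toReal + 1) := ENNReal.ofReal_le_ofReal (by linarith)

end HL
end
end

section
/- Let (μ_k)_{k∈ℤ} be nonnegative locally integrable functions on ℝ^n satisfying the Carleson condition with constant A. Let φ∈𝒮(ℝ^n) with ∫φ≠0, and set P_k f=φ_k*f where φ_k(x)=2^{kn}φ(2^k x), and let 𝒩^φ be the nontangential maximal function built from φ. Then for every 0<p<∞ there is a constant C=C(n,p,A) such that for all f∈L²(ℝ^n): ∫_{ℝ^n} Σ_{k∈ℤ} |P_k f(x)|^p μ_k(x) dx ≤ C ‖𝒩^φ f‖_{L^p(ℝ^n)}^p. -/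
noncomputable section

open MeasureTheory Filter Topology SchwartzMap Metric
open scoped ENNReal NNReal

namespace HL

variable {n : ℕ}

/-! ### Auxiliary machinery for Statement 7 -/

section Stmt7Aux

private lemma two_rpow_pos (x : ℝ) : (0:ℝ) < 2 ^ x := Real.rpow_pos_of_pos two_pos x

/-- dyadic levels in `ℝ≥0∞` -/
private def lamE (j : ℤ) : ℝ≥0∞ := ENNReal.ofReal ((2:ℝ) ^ (j:ℝ))

private lemma lamE_lt_top (j : ℤ) : lamE j < ⊤ := ENNReal.ofReal_lt_top

private lemma lamE_rpow (j : ℤ) (p : ℝ) : lamE j ^ p = ENNReal.ofReal ((2:ℝ) ^ ((j:ℝ) * p)) := by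
  rw [lamE, ENNReal.ofReal_rpow_of_pos (two_rpow_pos _),
    ← Real.rpow_mul (by norm_num : (0:ℝ) ≤ 2)]

private lemma lamE_rpow_ne_top (j : ℤ) (p : ℝ) : lamE j ^ p ≠ ⊤ := by
  rw [lamE_rpow]; exact ENNReal.ofReal_ne_top

private lemma exists_greatest_rpow {α : ℝ} (hα : 0 < α) :
    ∃ j₀ : ℤ, (2:ℝ) ^ (j₀:ℝ) < α ∧ ∀ j : ℤ, (2:ℝ) ^ (j:ℝ) < α → j ≤ j₀ := by
  obtain ⟨M, hM⟩ := pow_unbounded_of_one_lt α (one_lt_two (α := ℝ))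
  obtain ⟨N, hN⟩ := exists_pow_lt_of_lt_one hα (by norm_num : (1/2:ℝ) < 1)
  refine Int.exists_greatest_of_bdd ⟨(M:ℤ), fun j hj => ?_⟩ ⟨-(N:ℤ), ?_⟩
  · have hM2 : (2:ℝ) ^ (((M:ℤ)):ℝ) = 2 ^ M := by
      rw [Real.rpow_intCast, zpow_natCast]
    have h2 : (2:ℝ) ^ (j:ℝ) < 2 ^ (((M:ℤ)):ℝ) := by
      rw [hM2]; exact hj.trans hM
    have := (Real.rpow_lt_rpow_left_iff (by norm_num : (1:ℝ) < 2)).1 h2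
    exact_mod_cast this.le
  · have hh : (2:ℝ) ^ ((-(N:ℤ) : ℤ):ℝ) = (1/2:ℝ) ^ N := by
      rw [show ((-(N:ℤ) : ℤ):ℝ) = -(N:ℝ) by push_cast; ring]
      rw [Real.rpow_neg (by norm_num : (0:ℝ) ≤ 2), Real.rpow_natCast, one_div, inv_pow]
    rw [hh]; exact hN

open Classical in
private lemma rpow_le_tsum_levels {p : ℝ} (hp : 0 < p) (a : ℝ≥0∞) :
    a ^ p ≤ ENNReal.ofReal ((2:ℝ) ^ p) * ∑' j : ℤ, (if lamE j < a then lamE j ^ p else 0) := by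
  rcases eq_or_ne a 0 with rfl | ha0
  · rw [ENNReal.zero_rpow_of_pos hp]; exact zero_le
  rcases eq_or_ne a ⊤ with rfl | hatop
  · have h1 : ∀ m : ℕ, (1:ℝ≥0∞) ≤ (if lamE (m:ℤ) < ⊤ then lamE (m:ℤ) ^ p else 0) := by
      intro m
      rw [if_pos (lamE_lt_top _)]
      calc (1:ℝ≥0∞) = 1 ^ p := (ENNReal.one_rpow p).symm
        _ ≤ lamE (m:ℤ) ^ p := by
            apply ENNReal.rpow_le_rpow _ hp.le
            rw [lamE, ← ENNReal.ofReal_one]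
            exact ENNReal.ofReal_le_ofReal (Real.one_le_rpow one_le_two (by positivity))
    have h2 : (⊤:ℝ≥0∞) ≤ ∑' j : ℤ, (if lamE j < ⊤ then lamE j ^ p else 0) := by
      calc (⊤:ℝ≥0∞) = ∑' _ : ℕ, (1:ℝ≥0∞) :=
            (ENNReal.tsum_const_eq_top_of_ne_zero one_ne_zero).symm
        _ ≤ ∑' m : ℕ, (if lamE (m:ℤ) < ⊤ then lamE (m:ℤ) ^ p else 0) := ENNReal.tsum_le_tsum h1
        _ ≤ ∑' j : ℤ, (if lamE j < ⊤ then lamE j ^ p else 0) :=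
            ENNReal.tsum_comp_le_tsum_of_injective Nat.cast_injective _
    rw [top_le_iff] at h2
    rw [h2, ENNReal.mul_top (ENNReal.ofReal_pos.2 (two_rpow_pos p)).ne']
    exact le_top
  have hα : 0 < a.toReal := ENNReal.toReal_pos ha0 hatop
  obtain ⟨j₀, hj₀, hmax⟩ := exists_greatest_rpow hα
  have hcond : lamE j₀ < a := by
    rw [lamE]
    exact (ENNReal.ofReal_lt_iff_lt_toReal (two_rpow_pos _).le hatop).2 hj₀
  have hle : a.toReal ≤ (2:ℝ) ^ ((j₀:ℝ) + 1) := by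
    by_contra hcon
    push_neg at hcon
    have := hmax (j₀ + 1) (by push_cast; exact hcon)
    omega
  calc a ^ p = ENNReal.ofReal (a.toReal ^ p) := by
        conv_lhs => rw [← ENNReal.ofReal_toReal hatop]
        rw [ENNReal.ofReal_rpow_of_pos hα]
    _ ≤ ENNReal.ofReal ((2:ℝ) ^ p * (2:ℝ) ^ ((j₀:ℝ) * p)) := by
        apply ENNReal.ofReal_le_ofReal
        calc a.toReal ^ p ≤ ((2:ℝ) ^ ((j₀:ℝ)+1)) ^ p :=
              Real.rpow_le_rpow ENNReal.toReal_nonneg hle hp.le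
          _ = (2:ℝ) ^ (((j₀:ℝ)+1) * p) := (Real.rpow_mul (by norm_num) _ _).symm
          _ = (2:ℝ) ^ p * (2:ℝ) ^ ((j₀:ℝ) * p) := by
              rw [show ((j₀:ℝ)+1)*p = p + (j₀:ℝ)*p by ring, Real.rpow_add two_pos]
    _ = ENNReal.ofReal ((2:ℝ)^p) * ENNReal.ofReal ((2:ℝ)^((j₀:ℝ)*p)) :=
        ENNReal.ofReal_mul (two_rpow_pos p).le
    _ ≤ _ := by
        apply mul_le_mul_right
        calc ENNReal.ofReal ((2:ℝ)^((j₀:ℝ)*p)) = (if lamE j₀ < a then lamE j₀ ^ p else 0) := by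
              rw [if_pos hcond, lamE_rpow]
          _ ≤ ∑' j : ℤ, (if lamE j < a then lamE j ^ p else 0) := ENNReal.le_tsum j₀

open Classical in
private lemma tsum_levels_le_rpow {p : ℝ} (hp : 0 < p) (a : ℝ≥0∞) :
    (∑' j : ℤ, if lamE j < a then lamE j ^ p else 0)
      ≤ ENNReal.ofReal ((1 - (2:ℝ) ^ (-p))⁻¹) * a ^ p := by
  have h2p1 : (2:ℝ) ^ (-p) < 1 := Real.rpow_lt_one_of_one_lt_of_neg one_lt_two (neg_lt_zero.2 hp)
  have h2p0 : (0:ℝ) < (2:ℝ) ^ (-p) := two_rpow_pos _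
  rcases eq_or_ne a 0 with rfl | ha0
  · simp
  rcases eq_or_ne a ⊤ with rfl | hatop
  · rw [ENNReal.top_rpow_of_pos hp,
      ENNReal.mul_top (ENNReal.ofReal_pos.2 (inv_pos.2 (by linarith))).ne']
    exact le_top
  have hα : 0 < a.toReal := ENNReal.toReal_pos ha0 hatop
  obtain ⟨j₀, hj₀, hmax⟩ := exists_greatest_rpow hα
  have hstep : ∀ j : ℤ, (if lamE j < a then lamE j ^ p else 0)
      ≤ (fun j : ℤ => if j ≤ j₀ then lamE j ^ p else 0) j := by
    intro j
    by_cases h : lamE j < a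
    · rw [if_pos h]
      simp only
      rw [if_pos (hmax j ((ENNReal.ofReal_lt_iff_lt_toReal (two_rpow_pos _).le hatop).1 h))]
    · rw [if_neg h]; exact zero_le
  refine le_trans (ENNReal.tsum_le_tsum hstep) ?_
  have hinj : Function.Injective (fun m : ℕ => j₀ - (m:ℤ)) := by
    intro a b h
    simp only at h
    omega
  have hsupp : Function.support (fun j : ℤ => if j ≤ j₀ then lamE j ^ p else 0) ⊆
      Set.range (fun m : ℕ => j₀ - (m:ℤ)) := by
    intro j hj
    rw [Function.mem_support] at hj
    by_cases h : j ≤ j₀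
    · exact ⟨(j₀ - j).toNat, by simp only; omega⟩
    · exact absurd (if_neg h) hj
  rw [← Function.Injective.tsum_eq hinj hsupp]
  have hterm : ∀ m : ℕ, (if (j₀ - (m:ℤ)) ≤ j₀ then lamE (j₀ - (m:ℤ)) ^ p else 0)
      = ENNReal.ofReal ((2:ℝ) ^ ((j₀:ℝ) * p)) * ENNReal.ofReal ((2:ℝ)^(-p)) ^ m := by
    intro m
    rw [if_pos (by omega), lamE_rpow]
    rw [← ENNReal.ofReal_pow h2p0.le, ← ENNReal.ofReal_mul (two_rpow_pos _).le]
    congr 1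
    have he : ((j₀ - (m:ℤ) : ℤ):ℝ) * p = (j₀:ℝ)*p + (-p)*(m:ℝ) := by push_cast; ring
    rw [he, Real.rpow_add two_pos]
    congr 1
    rw [Real.rpow_mul (by norm_num : (0:ℝ) ≤ 2), Real.rpow_natCast]
  calc (∑' m : ℕ, if (j₀ - (m:ℤ)) ≤ j₀ then lamE (j₀ - (m:ℤ)) ^ p else 0)
      = ∑' m : ℕ, ENNReal.ofReal ((2:ℝ) ^ ((j₀:ℝ) * p)) * ENNReal.ofReal ((2:ℝ)^(-p)) ^ m :=
        tsum_congr hterm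
    _ = ENNReal.ofReal ((2:ℝ) ^ ((j₀:ℝ) * p)) * (1 - ENNReal.ofReal ((2:ℝ)^(-p)))⁻¹ := by
        rw [ENNReal.tsum_mul_left, ENNReal.tsum_geometric]
    _ = ENNReal.ofReal ((1 - (2:ℝ)^(-p))⁻¹) * ENNReal.ofReal ((2:ℝ) ^ ((j₀:ℝ) * p)) := by
        rw [mul_comm]
        congr 1
        rw [← ENNReal.ofReal_one, ← ENNReal.ofReal_sub _ h2p0.le,
          ← ENNReal.ofReal_inv_of_pos (by linarith)]
    _ ≤ ENNReal.ofReal ((1 - (2:ℝ)^(-p))⁻¹) * a ^ p := by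
        apply mul_le_mul_right
        have h1 : (2:ℝ)^((j₀:ℝ)*p) ≤ a.toReal ^ p := by
          rw [Real.rpow_mul (by norm_num : (0:ℝ) ≤ 2)]
          exact Real.rpow_le_rpow (two_rpow_pos _).le hj₀.le hp.le
        calc ENNReal.ofReal ((2:ℝ)^((j₀:ℝ)*p)) ≤ ENNReal.ofReal (a.toReal ^ p) :=
              ENNReal.ofReal_le_ofReal h1
          _ = a ^ p := by rw [← ENNReal.ofReal_rpow_of_pos hα, ENNReal.ofReal_toReal hatop]

/-- The dyadic cube at scale `2^{-m}` with index `z`. -/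
private def dQ (n : ℕ) (m : ℤ) (z : Fin n → ℤ) : Set (Rn n) :=
  {y | ∀ i, (z i : ℝ) ≤ (2:ℝ)^m * y i ∧ (2:ℝ)^m * y i < z i + 1}

private lemma mem_dQ {m : ℤ} {z : Fin n → ℤ} {y : Rn n} :
    y ∈ dQ n m z ↔ ∀ i, ⌊(2:ℝ)^m * y i⌋ = z i := by
  simp only [dQ, Set.mem_setOf_eq]
  exact forall_congr' fun i => Int.floor_eq_iff.symm

private lemma dQ_self (m : ℤ) (y : Rn n) : y ∈ dQ n m (fun i => ⌊(2:ℝ)^m * y i⌋) :=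
  mem_dQ.2 fun _ => rfl

private lemma dQ_index_eq {m : ℤ} {z z' : Fin n → ℤ} {y : Rn n}
    (h : y ∈ dQ n m z) (h' : y ∈ dQ n m z') : z = z' :=
  funext fun i => (mem_dQ.1 h i).symm.trans (mem_dQ.1 h' i)

private lemma floor_div_pow {d : ℕ} {a : ℤ} {u : ℝ} (h1 : (a:ℝ) ≤ u) (h2 : u < a + 1) :
    ⌊u / 2^d⌋ = ⌊(a:ℝ) / 2^d⌋ := by
  have hd : (0:ℝ) < 2^d := by positivity
  set q := ⌊(a:ℝ) / 2^d⌋ with hq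
  have hq1 : (q:ℝ) ≤ (a:ℝ)/2^d := Int.floor_le _
  have hq2 : (a:ℝ)/2^d < q + 1 := Int.lt_floor_add_one _
  have ha : (a:ℝ) < ((q+1) * 2^d : ℤ) := by
    push_cast
    rwa [div_lt_iff₀ hd] at hq2
  have haint : a < (q+1) * 2^d := by exact_mod_cast ha
  have haint' : a + 1 ≤ (q+1) * 2^d := haint
  have ha' : (a:ℝ) + 1 ≤ (q+1) * 2^d := by exact_mod_cast haint'
  rw [Int.floor_eq_iff]
  constructor
  · exact hq1.trans (by gcongr)
  · calc u / 2^d < ((a:ℝ)+1) / 2^d := by gcongr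
      _ ≤ (q:ℝ)+1 := by rw [div_le_iff₀ hd]; exact_mod_cast ha'

private lemma dQ_floor_agree {m' m : ℤ} (hmm : m' ≤ m) {z : Fin n → ℤ} {x y : Rn n}
    (hx : x ∈ dQ n m z) (hy : y ∈ dQ n m z) (i : Fin n) :
    ⌊(2:ℝ)^m' * x i⌋ = ⌊(2:ℝ)^m' * y i⌋ := by
  set d : ℕ := (m - m').toNat with hd
  have key : ∀ w : ℝ, (2:ℝ)^m' * w = ((2:ℝ)^m * w) / 2^d := by
    intro w
    rw [eq_div_iff (by positivity : ((2:ℝ)^d) ≠ 0)]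
    have h2 : (2:ℝ)^m' * (2:ℝ)^(d:ℤ) = 2^m := by
      rw [← zpow_add₀ (by norm_num : (2:ℝ) ≠ 0)]
      congr 1
      omega
    calc (2:ℝ)^m' * w * 2^d = ((2:ℝ)^m' * (2:ℝ)^(d:ℤ)) * w := by
          rw [zpow_natCast]; ring
      _ = (2:ℝ)^m * w := by rw [h2]
  obtain ⟨hx1, hx2⟩ := hx i
  obtain ⟨hy1, hy2⟩ := hy i
  rw [key, key, floor_div_pow hx1 hx2, floor_div_pow hy1 hy2]

private lemma dQ_subset {m' m : ℤ} (hmm : m' ≤ m) {z z' : Fin n → ℤ}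
    (hne : (dQ n m z ∩ dQ n m' z').Nonempty) : dQ n m z ⊆ dQ n m' z' := by
  obtain ⟨w, hw1, hw2⟩ := hne
  intro y hy
  rw [mem_dQ]
  intro i
  rw [dQ_floor_agree hmm hy hw1 i]
  exact mem_dQ.1 hw2 i

/-- Lower corner of a dyadic cube. -/
private def cPt (m : ℤ) (z : Fin n → ℤ) : Rn n := WithLp.toLp 2 (fun i => (z i : ℝ) * (2:ℝ)^(-m))

private lemma cPt_apply (m : ℤ) (z : Fin n → ℤ) (i : Fin n) :
    cPt m z i = (z i : ℝ) * (2:ℝ)^(-m) := rfl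

private lemma two_zpow_mul (m : ℤ) (r : ℝ) : (2:ℝ)^m * (r * (2:ℝ)^(-m)) = r := by
  rw [zpow_neg]
  field_simp

private lemma cPt_mem (m : ℤ) (z : Fin n → ℤ) : cPt m z ∈ dQ n m z := by
  rw [mem_dQ]
  intro i
  rw [cPt_apply, two_zpow_mul, Int.floor_intCast]

/-- Index of the ancestor of the cube `(m, z)` at scale `m'`. -/
private def ancZ (m : ℤ) (z : Fin n → ℤ) (m' : ℤ) : Fin n → ℤ :=
  fun i => ⌊(2:ℝ)^m' * cPt m z i⌋

private lemma cPt_mem_anc (m : ℤ) (z : Fin n → ℤ) (m' : ℤ) :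
    cPt m z ∈ dQ n m' (ancZ m z m') :=
  dQ_self m' (cPt m z)

private lemma ancZ_self (m : ℤ) (z : Fin n → ℤ) : ancZ m z m = z := by
  funext i
  show ⌊(2:ℝ)^m * cPt m z i⌋ = z i
  rw [cPt_apply, two_zpow_mul, Int.floor_intCast]

private lemma dQ_subset_anc {m' m : ℤ} (hmm : m' ≤ m) (z : Fin n → ℤ) :
    dQ n m z ⊆ dQ n m' (ancZ m z m') :=
  dQ_subset hmm ⟨cPt m z, cPt_mem m z, cPt_mem_anc m z m'⟩

private lemma dQ_eq_preimage (m : ℤ) (z : Fin n → ℤ) :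
    dQ n m z = ((MeasurableEquiv.toLp 2 (Fin n → ℝ)).symm) ⁻¹'
      (Set.univ.pi fun i => Set.Ico ((z i:ℝ) * (2:ℝ)^(-m)) (((z i:ℝ)+1) * (2:ℝ)^(-m))) := by
  ext y
  simp only [Set.mem_preimage, Set.mem_pi, Set.mem_univ, forall_true_left, Set.mem_Ico,
    dQ, Set.mem_setOf_eq]
  refine forall_congr' fun i => ?_
  have hy : ((MeasurableEquiv.toLp 2 (Fin n → ℝ)).symm) y i = y i := rfl
  rw [hy]
  have hprod : (2:ℝ)^(-m) * (2:ℝ)^m = 1 := by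
    rw [← zpow_add₀ (by norm_num : (2:ℝ) ≠ 0)]
    simp
  have hprod' : (2:ℝ)^m * (2:ℝ)^(-m) = 1 := by rw [mul_comm]; exact hprod
  have h2 : (0:ℝ) < (2:ℝ)^(-m) := by positivity
  constructor
  · rintro ⟨h1, h3⟩
    constructor
    · calc (z i:ℝ) * (2:ℝ)^(-m) ≤ (2:ℝ)^m * y i * (2:ℝ)^(-m) :=
            mul_le_mul_of_nonneg_right h1 h2.le
        _ = y i := by rw [mul_comm ((2:ℝ)^m) (y i), mul_assoc, hprod', mul_one]
    · calc y i = (2:ℝ)^m * y i * (2:ℝ)^(-m) := by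
            rw [mul_comm ((2:ℝ)^m) (y i), mul_assoc, hprod', mul_one]
        _ < ((z i:ℝ)+1) * (2:ℝ)^(-m) := mul_lt_mul_of_pos_right h3 h2
  · rintro ⟨h1, h3⟩
    constructor
    · calc (z i : ℝ) = (z i:ℝ) * (2:ℝ)^(-m) * (2:ℝ)^m := by rw [mul_assoc, hprod, mul_one]
        _ ≤ y i * (2:ℝ)^m := mul_le_mul_of_nonneg_right h1 (by positivity)
        _ = (2:ℝ)^m * y i := mul_comm _ _
    · calc (2:ℝ)^m * y i = y i * (2:ℝ)^m := mul_comm _ _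
        _ < ((z i:ℝ)+1) * (2:ℝ)^(-m) * (2:ℝ)^m := mul_lt_mul_of_pos_right h3 (by positivity)
        _ = (z i:ℝ)+1 := by rw [mul_assoc, hprod, mul_one]

private lemma measurableSet_dQ (m : ℤ) (z : Fin n → ℤ) : MeasurableSet (dQ n m z) := by
  rw [dQ_eq_preimage]
  exact (MeasurableSet.univ_pi fun _ => measurableSet_Ico).preimage
    (MeasurableEquiv.measurable _)

private lemma volume_dQ (m : ℤ) (z : Fin n → ℤ) :
    volume (dQ n m z) = ENNReal.ofReal ((2:ℝ)^(-m)) ^ n := by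
  rw [dQ_eq_preimage,
    (EuclideanSpace.volume_preserving_symm_measurableEquiv_toLp (Fin n)).measure_preimage
      ((MeasurableSet.univ_pi fun _ => measurableSet_Ico).nullMeasurableSet),
    volume_pi_pi]
  have hv : ∀ i : Fin n, volume (Set.Ico ((z i:ℝ) * (2:ℝ)^(-m)) (((z i:ℝ)+1) * (2:ℝ)^(-m)))
      = ENNReal.ofReal ((2:ℝ)^(-m)) := by
    intro i
    rw [Real.volume_Ico]
    congr 1
    ring
  rw [Finset.prod_congr rfl (fun i _ => hv i), Finset.prod_const, Finset.card_univ,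
    Fintype.card_fin]

/-- The set of maximal dyadic cubes inside `E`. -/
private def MaxC (E : Set (Rn n)) : Set (ℤ × (Fin n → ℤ)) :=
  {w | dQ n w.1 w.2 ⊆ E ∧ ∀ m'' < w.1, ¬ dQ n m'' (ancZ w.1 w.2 m'') ⊆ E}

private lemma maxc_disj_aux {E : Set (Rn n)} {w w' : ℤ × (Fin n → ℤ)} (hw : w ∈ MaxC E)
    (hw' : w' ∈ MaxC E) (hlt : w'.1 < w.1) :
    ¬ (dQ n w.1 w.2 ∩ dQ n w'.1 w'.2).Nonempty := by
  intro hne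
  have hsub : dQ n w.1 w.2 ⊆ dQ n w'.1 w'.2 := dQ_subset hlt.le hne
  have hc : cPt w.1 w.2 ∈ dQ n w'.1 w'.2 := hsub (cPt_mem _ _)
  have heq : ancZ w.1 w.2 w'.1 = w'.2 := dQ_index_eq (cPt_mem_anc w.1 w.2 w'.1) hc
  exact hw.2 w'.1 hlt (heq ▸ hw'.1)

private lemma maxc_disjoint {E : Set (Rn n)} {w w' : ℤ × (Fin n → ℤ)} (hw : w ∈ MaxC E)
    (hw' : w' ∈ MaxC E) (hne : w ≠ w') :
    Disjoint (dQ n w.1 w.2) (dQ n w'.1 w'.2) := by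
  rw [Set.disjoint_iff_inter_eq_empty]
  by_contra h
  have hne2 : (dQ n w.1 w.2 ∩ dQ n w'.1 w'.2).Nonempty := Set.nonempty_iff_ne_empty.2 h
  rcases lt_trichotomy w.1 w'.1 with h1 | h1 | h1
  · exact maxc_disj_aux hw' hw h1 (by rwa [Set.inter_comm] at hne2)
  · obtain ⟨y, hy1, hy2⟩ := hne2
    apply hne
    have hy2' : y ∈ dQ n w.1 w'.2 := by rw [h1]; exact hy2
    exact Prod.ext h1 (dQ_index_eq hy1 hy2')
  · exact maxc_disj_aux hw hw' h1 hne2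

private lemma exists_maxc (hn : 1 ≤ n) {E : Set (Rn n)} (hE : volume E ≠ ⊤) {m : ℤ}
    {z : Fin n → ℤ} (hsub : dQ n m z ⊆ E) :
    ∃ w : ℤ × (Fin n → ℤ), w ∈ MaxC E ∧ w.1 ≤ m ∧ dQ n m z ⊆ dQ n w.1 w.2 := by
  obtain ⟨M, hM⟩ := ENNReal.exists_nat_gt hE
  have hscale : ∀ (m' : ℤ) (z' : Fin n → ℤ), dQ n m' z' ⊆ E → -(M:ℤ) ≤ m' := by
    intro m' z' hs
    by_contra hcon
    push_neg at hcon
    have hv : volume (dQ n m' z') ≤ volume E := measure_mono hs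
    rw [volume_dQ] at hv
    have h1 : (M:ℝ) ≤ (2:ℝ)^(-m') := by
      calc (M:ℝ) ≤ ((2:ℕ):ℝ)^(M:ℕ) := by exact_mod_cast (Nat.lt_two_pow_self (n := M)).le
        _ = (2:ℝ)^((M:ℕ):ℤ) := by rw [zpow_natCast]; norm_num
        _ ≤ (2:ℝ)^(-m') := zpow_le_zpow_right₀ one_le_two (by omega)
    have h2 : (M:ℝ≥0∞) ≤ ENNReal.ofReal ((2:ℝ)^(-m')) := by
      rw [← ENNReal.ofReal_natCast M]
      exact ENNReal.ofReal_le_ofReal h1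
    have h4 : (1:ℝ≥0∞) ≤ ENNReal.ofReal ((2:ℝ)^(-m')) := by
      rw [← ENNReal.ofReal_one]
      apply ENNReal.ofReal_le_ofReal
      have h5 : (2:ℝ)^(0:ℤ) ≤ (2:ℝ)^(-m') := zpow_le_zpow_right₀ one_le_two (by omega)
      simpa using h5
    have h3 : ENNReal.ofReal ((2:ℝ)^(-m')) ≤ ENNReal.ofReal ((2:ℝ)^(-m')) ^ n :=
      le_self_pow₀ h4 (by omega)
    exact absurd (lt_of_lt_of_le hM (h2.trans (h3.trans hv))) (lt_irrefl _)
  classical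
  have hP : ∃ m' : ℤ, (m' ≤ m ∧ dQ n m' (ancZ m z m') ⊆ E) :=
    ⟨m, le_rfl, by rw [ancZ_self]; exact hsub⟩
  have hbdd : ∃ b : ℤ, ∀ m' : ℤ, (m' ≤ m ∧ dQ n m' (ancZ m z m') ⊆ E) → b ≤ m' :=
    ⟨-(M:ℤ), fun m' h => hscale m' _ h.2⟩
  obtain ⟨m₀, ⟨hm₀m, hm₀E⟩, hmin⟩ := Int.exists_least_of_bdd hbdd hP
  refine ⟨(m₀, ancZ m z m₀), ⟨hm₀E, ?_⟩, hm₀m, dQ_subset_anc hm₀m z⟩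
  intro m'' hm'' hconE
  have hanc_eq : ancZ m₀ (ancZ m z m₀) m'' = ancZ m z m'' := by
    have h1 : dQ n m₀ (ancZ m z m₀) ⊆ dQ n m'' (ancZ m z m'') :=
      dQ_subset hm''.le ⟨cPt m z, cPt_mem_anc m z m₀, cPt_mem_anc m z m''⟩
    exact dQ_index_eq (cPt_mem_anc m₀ (ancZ m z m₀) m'') (h1 (cPt_mem m₀ (ancZ m z m₀)))
  rw [hanc_eq] at hconE
  have := hmin m'' ⟨by omega, hconE⟩
  omega

private lemma dQ_dist_le {m : ℤ} {z : Fin n → ℤ} {x y : Rn n}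
    (hx : x ∈ dQ n m z) (hy : y ∈ dQ n m z) : dist x y ≤ (n:ℝ) * (2:ℝ)^(-m) := by
  have hb : ∀ i, dist (x i) (y i) ≤ (2:ℝ)^(-m) := by
    intro i
    obtain ⟨h1, h2⟩ := hx i
    obtain ⟨h3, h4⟩ := hy i
    have hprod' : (2:ℝ)^m * (2:ℝ)^(-m) = 1 := by
      rw [← zpow_add₀ (by norm_num : (2:ℝ) ≠ 0)]; simp
    have key : |(2:ℝ)^m * x i - (2:ℝ)^m * y i| ≤ 1 := abs_le.2 ⟨by linarith, by linarith⟩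
    have hxy : x i - y i = ((2:ℝ)^m * x i - (2:ℝ)^m * y i) * (2:ℝ)^(-m) := by
      rw [sub_mul, mul_comm ((2:ℝ)^m) (x i), mul_assoc, hprod', mul_one,
        mul_comm ((2:ℝ)^m) (y i), mul_assoc, hprod', mul_one]
    rw [Real.dist_eq, hxy, abs_mul, abs_of_pos (by positivity : (0:ℝ) < (2:ℝ)^(-m))]
    calc |(2:ℝ)^m * x i - (2:ℝ)^m * y i| * (2:ℝ)^(-m) ≤ 1 * (2:ℝ)^(-m) :=
          mul_le_mul_of_nonneg_right key (by positivity)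
      _ = (2:ℝ)^(-m) := one_mul _
  rw [EuclideanSpace.dist_eq]
  have hsum : (∑ i, dist (x i) (y i)^2) ≤ (n:ℝ) * ((2:ℝ)^(-m))^2 := by
    calc (∑ i, dist (x i) (y i)^2) ≤ ∑ _i : Fin n, ((2:ℝ)^(-m))^2 :=
          Finset.sum_le_sum fun i _ => pow_le_pow_left₀ dist_nonneg (hb i) 2
      _ = (n:ℝ) * ((2:ℝ)^(-m))^2 := by
          rw [Finset.sum_const, Finset.card_univ, Fintype.card_fin, nsmul_eq_mul]
  calc Real.sqrt (∑ i, dist (x i) (y i)^2) ≤ Real.sqrt ((n:ℝ) * ((2:ℝ)^(-m))^2) :=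
        Real.sqrt_le_sqrt hsum
    _ = Real.sqrt (n:ℝ) * (2:ℝ)^(-m) := by
        rw [Real.sqrt_mul (by positivity), Real.sqrt_sq (by positivity)]
    _ ≤ (n:ℝ) * (2:ℝ)^(-m) := by
        apply mul_le_mul_of_nonneg_right _ (by positivity)
        calc Real.sqrt (n:ℝ) ≤ Real.sqrt ((n:ℝ)^2) := by
              apply Real.sqrt_le_sqrt
              have hnn : n ≤ n^2 := Nat.le_self_pow two_ne_zero n
              exact_mod_cast hnn
          _ = (n:ℝ) := Real.sqrt_sq (Nat.cast_nonneg n)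

private lemma dQ_subset_cube {m : ℤ} {z : Fin n → ℤ} {l : ℝ} (hl : (2:ℝ)^(-m) ≤ l) :
    dQ n m z ⊆ cube (cPt m z) l := by
  intro y hy
  simp only [cube, Set.mem_setOf_eq]
  intro i
  obtain ⟨h1, h2⟩ := hy i
  have hprod : (2:ℝ)^(-m) * (2:ℝ)^m = 1 := by
    rw [← zpow_add₀ (by norm_num : (2:ℝ) ≠ 0)]; simp
  have hprod' : (2:ℝ)^m * (2:ℝ)^(-m) = 1 := by rw [mul_comm]; exact hprod
  have h2pos : (0:ℝ) < (2:ℝ)^(-m) := by positivity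
  constructor
  · calc cPt m z i = (z i:ℝ) * (2:ℝ)^(-m) := cPt_apply m z i
      _ ≤ (2:ℝ)^m * y i * (2:ℝ)^(-m) := mul_le_mul_of_nonneg_right h1 h2pos.le
      _ = y i := by rw [mul_comm ((2:ℝ)^m) (y i), mul_assoc, hprod', mul_one]
  · calc y i = (2:ℝ)^m * y i * (2:ℝ)^(-m) := by
          rw [mul_comm ((2:ℝ)^m) (y i), mul_assoc, hprod', mul_one]
      _ ≤ ((z i:ℝ)+1) * (2:ℝ)^(-m) := (mul_lt_mul_of_pos_right h2 h2pos).le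
      _ = (z i:ℝ) * (2:ℝ)^(-m) + (2:ℝ)^(-m) := by ring
      _ ≤ cPt m z i + l := by rw [cPt_apply]; linarith

open Classical in
private lemma whitney (hn : 1 ≤ n) (μ : ℤ → Rn n → ℝ) {A : ℝ} (hA1 : 1 ≤ A)
    (hA : CarlesonCond μ A) (F : ℤ → Set (Rn n)) (E : Set (Rn n))
    (hFE : ∀ (k : ℤ), ∀ x ∈ F k, Metric.closedBall x ((2:ℝ)^(-(k+1))) ⊆ E) :
    (∑' k : ℤ, ∫⁻ x in F k, ENNReal.ofReal (μ k x)) ≤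
      ENNReal.ofReal (A * 2^((n+1)*n)) * volume E := by
  have hApos : (0:ℝ) < A * 2^((n+1)*n) :=
    mul_pos (lt_of_lt_of_le one_pos hA1) (by positivity)
  rcases eq_or_ne (volume E) ⊤ with hvol | hvol
  · rw [hvol, ENNReal.mul_top (ENNReal.ofReal_pos.2 hApos).ne']
    exact le_top
  have hsmall : ∀ (k : ℤ) (zz : Fin n → ℤ), (dQ n (k + n + 1) zz ∩ F k).Nonempty →
      dQ n (k + n + 1) zz ⊆ E := by
    rintro k zz ⟨x, hxQ, hxF⟩ y hy
    apply hFE k x hxF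
    rw [Metric.mem_closedBall]
    calc dist y x ≤ (n:ℝ) * (2:ℝ)^(-(k + n + 1)) := dQ_dist_le hy hxQ
      _ ≤ (2:ℝ)^(n:ℤ) * (2:ℝ)^(-(k + n + 1)) := by
          apply mul_le_mul_of_nonneg_right _ (by positivity)
          calc (n:ℝ) ≤ ((2:ℕ):ℝ)^n := by exact_mod_cast (Nat.lt_two_pow_self (n := n)).le
            _ = (2:ℝ)^(n:ℤ) := by rw [zpow_natCast]; norm_num
      _ = (2:ℝ)^(-(k+1)) := by
          rw [← zpow_add₀ (by norm_num : (2:ℝ) ≠ 0)]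
          congr 1
          ring
  set marked : ℤ × (Fin n → ℤ) → Prop := fun σ => (dQ n (σ.1 + n + 1) σ.2 ∩ F σ.1).Nonempty
    with hmarked
  set f : ℤ × (Fin n → ℤ) → ℝ≥0∞ := fun σ =>
    if marked σ then ∫⁻ x in dQ n (σ.1 + n + 1) σ.2, ENNReal.ofReal (μ σ.1 x) else 0 with hf
  set Φ : ℤ × (Fin n → ℤ) → ℤ × (Fin n → ℤ) := fun σ =>
    if h : marked σ then (exists_maxc hn hvol (hsmall σ.1 σ.2 h)).choose else σ with hΦ
  have hΦspec : ∀ σ, marked σ → (Φ σ) ∈ MaxC E ∧ (Φ σ).1 ≤ σ.1 + n + 1 ∧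
      dQ n (σ.1 + n + 1) σ.2 ⊆ dQ n (Φ σ).1 (Φ σ).2 := by
    intro σ h
    have hspec := (exists_maxc hn hvol (hsmall σ.1 σ.2 h)).choose_spec
    rw [hΦ]
    simp only [dif_pos h]
    exact hspec
  have step1 : ∀ k : ℤ, (∫⁻ x in F k, ENNReal.ofReal (μ k x)) ≤
      ∑' zz : Fin n → ℤ, f (k, zz) := by
    intro k
    have hcover : F k ⊆ ⋃ zz : {zz : Fin n → ℤ // marked (k, zz)}, dQ n (k + n + 1) zz.1 := by
      intro x hx
      exact Set.mem_iUnion.2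
        ⟨⟨fun i => ⌊(2:ℝ)^(k + n + 1) * x i⌋, ⟨x, dQ_self _ x, hx⟩⟩, dQ_self _ x⟩
    calc (∫⁻ x in F k, ENNReal.ofReal (μ k x))
        ≤ ∫⁻ x in (⋃ zz : {zz : Fin n → ℤ // marked (k, zz)}, dQ n (k + n + 1) zz.1),
            ENNReal.ofReal (μ k x) := lintegral_mono_set hcover
      _ ≤ ∑' zz : {zz : Fin n → ℤ // marked (k, zz)},
            ∫⁻ x in dQ n (k + n + 1) zz.1, ENNReal.ofReal (μ k x) := lintegral_iUnion_le _ _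
      _ = ∑' zz : {zz : Fin n → ℤ // marked (k, zz)}, f (k, zz.1) := by
          apply tsum_congr
          intro zz
          rw [hf]
          simp only
          rw [if_pos zz.2]
      _ ≤ ∑' zz : Fin n → ℤ, f (k, zz) :=
          ENNReal.tsum_comp_le_tsum_of_injective Subtype.val_injective (fun zz => f (k, zz))
  have step1' : (∑' k : ℤ, ∫⁻ x in F k, ENNReal.ofReal (μ k x)) ≤ ∑' σ, f σ := by
    rw [ENNReal.tsum_prod']
    exact ENNReal.tsum_le_tsum step1
  have step2 : ∀ w : ℤ × (Fin n → ℤ),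
      (∑' σ : {σ : ℤ × (Fin n → ℤ) // Φ σ = w}, f σ.1) ≤
      Set.indicator (MaxC E)
        (fun w => ENNReal.ofReal (A * 2^((n+1)*n)) * volume (dQ n w.1 w.2)) w := by
    intro w
    by_cases hw : w ∈ MaxC E
    · rw [Set.indicator_of_mem hw]
      set l : ℝ := (2:ℝ)^((n:ℤ) + 1 - w.1) with hl
      have hlpos : 0 < l := by positivity
      have hcubesub : dQ n w.1 w.2 ⊆ cube (cPt w.1 w.2) l := by
        apply dQ_subset_cube
        rw [hl]
        apply zpow_le_zpow_right₀ one_le_two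
        omega
      have h1 : (∑' σ : {σ : ℤ × (Fin n → ℤ) // Φ σ = w}, f σ.1) ≤
          ∑' k : ℤ, (if (2:ℝ)^(-k) ≤ l then
            ∫⁻ x in cube (cPt w.1 w.2) l, ENNReal.ofReal (μ k x) else 0) := by
        have ha : (∑' σ : {σ : ℤ × (Fin n → ℤ) // Φ σ = w}, f σ.1)
            = ∑' σ : ℤ × (Fin n → ℤ), (if Φ σ = w then f σ else 0) := by
          calc (∑' σ : {σ : ℤ × (Fin n → ℤ) // Φ σ = w}, f σ.1)
              = ∑' σ : ℤ × (Fin n → ℤ), Set.indicator {σ | Φ σ = w} f σ :=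
                tsum_subtype {σ | Φ σ = w} f
            _ = ∑' σ : ℤ × (Fin n → ℤ), (if Φ σ = w then f σ else 0) := by
                apply tsum_congr
                intro σ
                by_cases h : Φ σ = w
                · rw [Set.indicator_of_mem (show σ ∈ {σ | Φ σ = w} from h), if_pos h]
                · rw [Set.indicator_of_notMem (show σ ∉ {σ | Φ σ = w} from h), if_neg h]
        rw [ha, ENNReal.tsum_prod']
        apply ENNReal.tsum_le_tsum
        intro k
        by_cases hcase : w.1 ≤ k + n + 1
        · have hcond : (2:ℝ)^(-k) ≤ l := by
            rw [hl]
            apply zpow_le_zpow_right₀ one_le_two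
            omega
          rw [if_pos hcond]
          set S : Set (Fin n → ℤ) := {zz | marked (k, zz) ∧ Φ (k, zz) = w} with hS
          have hterm : ∀ zz : Fin n → ℤ, (if Φ (k, zz) = w then f (k, zz) else 0) =
              Set.indicator S
                (fun zz => ∫⁻ x in dQ n (k + n + 1) zz, ENNReal.ofReal (μ k x)) zz := by
            intro zz
            by_cases h1 : marked (k, zz) <;> by_cases h2 : Φ (k, zz) = w
            · rw [if_pos h2, Set.indicator_of_mem (show zz ∈ S from ⟨h1, h2⟩), hf]
              simp only
              rw [if_pos h1]
            · rw [if_neg h2, Set.indicator_of_notMem (fun hc => h2 hc.2)]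
            · rw [if_pos h2, Set.indicator_of_notMem (fun hc => h1 hc.1), hf]
              simp only
              rw [if_neg h1]
            · rw [if_neg h2, Set.indicator_of_notMem (fun hc => h2 hc.2)]
          calc (∑' zz : Fin n → ℤ, if Φ (k, zz) = w then f (k, zz) else 0)
              = ∑' zz : Fin n → ℤ, Set.indicator S
                  (fun zz => ∫⁻ x in dQ n (k + n + 1) zz, ENNReal.ofReal (μ k x)) zz :=
                tsum_congr hterm
            _ = ∑' zz : S, ∫⁻ x in dQ n (k + n + 1) zz.1, ENNReal.ofReal (μ k x) :=
                (tsum_subtype S _).symm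
            _ = ∫⁻ x in (⋃ zz : S, dQ n (k + n + 1) zz.1), ENNReal.ofReal (μ k x) := by
                rw [lintegral_iUnion (fun zz => measurableSet_dQ _ _)]
                intro z1 z2 hne12
                apply Set.disjoint_left.2
                intro y hy1 hy2
                exact hne12 (Subtype.ext (dQ_index_eq hy1 hy2))
            _ ≤ ∫⁻ x in cube (cPt w.1 w.2) l, ENNReal.ofReal (μ k x) := by
                apply lintegral_mono_set
                apply Set.iUnion_subset
                rintro ⟨zz, hzz1, hzz2⟩
                have hsub1 : dQ n (k + n + 1) zz ⊆ dQ n w.1 w.2 :=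
                  hzz2 ▸ (hΦspec (k, zz) hzz1).2.2
                exact hsub1.trans hcubesub
        · have hz : ∀ zz : Fin n → ℤ, (if Φ (k, zz) = w then f (k, zz) else 0) = 0 := by
            intro zz
            by_cases h2 : Φ (k, zz) = w
            · rw [if_pos h2, hf]
              simp only
              by_cases h1 : marked (k, zz)
              · exact absurd (h2 ▸ (hΦspec (k, zz) h1).2.1) hcase
              · rw [if_neg h1]
            · rw [if_neg h2]
          calc (∑' zz : Fin n → ℤ, if Φ (k, zz) = w then f (k, zz) else 0)
              = ∑' _zz : Fin n → ℤ, (0:ℝ≥0∞) := tsum_congr hz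
            _ = 0 := tsum_zero
            _ ≤ _ := zero_le
      calc (∑' σ : {σ : ℤ × (Fin n → ℤ) // Φ σ = w}, f σ.1)
          ≤ ∑' k : ℤ, (if (2:ℝ)^(-k) ≤ l then
              ∫⁻ x in cube (cPt w.1 w.2) l, ENNReal.ofReal (μ k x) else 0) := h1
        _ ≤ ENNReal.ofReal (A * l ^ n) := hA (cPt w.1 w.2) l hlpos
        _ = ENNReal.ofReal (A * 2^((n+1)*n)) * volume (dQ n w.1 w.2) := by
            rw [volume_dQ]
            have hle : l ^ n = 2^((n+1)*n) * ((2:ℝ)^(-w.1))^n := by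
              rw [hl, ← zpow_natCast ((2:ℝ)^((n:ℤ) + 1 - w.1)) n, ← zpow_mul,
                ← zpow_natCast ((2:ℝ)^(-w.1)) n, ← zpow_mul,
                ← zpow_natCast (2:ℝ) ((n+1)*n), ← zpow_add₀ (by norm_num : (2:ℝ) ≠ 0)]
              congr 1
              push_cast
              ring
            rw [hle, ← mul_assoc,
              ENNReal.ofReal_mul (mul_nonneg (by linarith) (by positivity)),
              ENNReal.ofReal_pow (by positivity)]
    · rw [Set.indicator_of_notMem hw]
      have hz : ∀ σ : {σ : ℤ × (Fin n → ℤ) // Φ σ = w}, f σ.1 = 0 := by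
        rintro ⟨σ, hσ⟩
        by_cases hm : marked σ
        · exact absurd (hσ ▸ (hΦspec σ hm).1) hw
        · rw [hf]
          simp only
          rw [if_neg hm]
      have h0 : (∑' σ : {σ : ℤ × (Fin n → ℤ) // Φ σ = w}, f σ.1) = 0 := by
        rw [tsum_congr hz]; exact tsum_zero
      exact h0.le
  calc (∑' k : ℤ, ∫⁻ x in F k, ENNReal.ofReal (μ k x)) ≤ ∑' σ, f σ := step1'
    _ = ∑' w : ℤ × (Fin n → ℤ), ∑' σ : {σ : ℤ × (Fin n → ℤ) // Φ σ = w}, f σ.1 := by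
        rw [← ENNReal.tsum_sigma (fun w (σ : {σ : ℤ × (Fin n → ℤ) // Φ σ = w}) => f σ.1)]
        exact ((Equiv.sigmaFiberEquiv Φ).tsum_eq f).symm
    _ ≤ ∑' w : ℤ × (Fin n → ℤ), Set.indicator (MaxC E)
          (fun w => ENNReal.ofReal (A * 2^((n+1)*n)) * volume (dQ n w.1 w.2)) w :=
        ENNReal.tsum_le_tsum step2
    _ = ∑' w : MaxC E, ENNReal.ofReal (A * 2^((n+1)*n)) * volume (dQ n w.1.1 w.1.2) :=
        (tsum_subtype (MaxC E) _).symm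
    _ = ENNReal.ofReal (A * 2^((n+1)*n)) * ∑' w : MaxC E, volume (dQ n w.1.1 w.1.2) :=
        ENNReal.tsum_mul_left
    _ = ENNReal.ofReal (A * 2^((n+1)*n)) * volume (⋃ w : MaxC E, dQ n w.1.1 w.1.2) := by
        congr 1
        rw [measure_iUnion ?_ (fun w => measurableSet_dQ _ _)]
        intro w1 w2 hne
        exact maxc_disjoint w1.2 w2.2 (fun h => hne (Subtype.ext h))
    _ ≤ ENNReal.ofReal (A * 2^((n+1)*n)) * volume E := by
        apply mul_le_mul_right
        apply measure_mono
        exact Set.iUnion_subset fun w => w.2.1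

end Stmt7Aux

theorem stmt7 (n : ℕ) (hn : 1 ≤ n) (μ : ℤ → Rn n → ℝ) (hμ0 : ∀ k x, 0 ≤ μ k x)
    (hμloc : ∀ k, MeasureTheory.LocallyIntegrable (μ k) volume)
    (A : ℝ) (hA : CarlesonCond μ A)
    (φ : 𝓢(Rn n, ℝ)) (hφ : (∫ x, φ x) ≠ 0) (p : ℝ) (hp : 0 < p) :
    ∃ C : ℝ, 0 < C ∧ ∀ f : Rn n → ℂ, MemLp f 2 volume →
      (∫⁻ x, ∑' k : ℤ, (‖convK (⇑φ) k f x‖₊ : ℝ≥0∞) ^ p * ENNReal.ofReal (μ k x))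
        ≤ ENNReal.ofReal C * ∫⁻ x, ntMax (⇑φ) f x ^ p := by
  classical
  set A' : ℝ := max A 1 with hA'def
  have hA'1 : 1 ≤ A' := le_max_right _ _
  have hA' : CarlesonCond μ A' := by
    intro a l hl
    refine (hA a l hl).trans (ENNReal.ofReal_le_ofReal ?_)
    exact mul_le_mul_of_nonneg_right (le_max_left _ _) (pow_nonneg hl.le n)
  have h2p1 : (2:ℝ) ^ (-p) < 1 := Real.rpow_lt_one_of_one_lt_of_neg one_lt_two (neg_lt_zero.2 hp)
  have h2p0 : (0:ℝ) < (2:ℝ) ^ (-p) := two_rpow_pos _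
  set cp : ℝ := (1 - (2:ℝ)^(-p))⁻¹ with hcpdef
  have hcp : 0 < cp := inv_pos.2 (by linarith)
  refine ⟨(2:ℝ)^p * (A' * 2^((n+1)*n)) * cp, ?_, ?_⟩
  · exact mul_pos (mul_pos (two_rpow_pos p)
      (mul_pos (lt_of_lt_of_le one_pos hA'1) (by positivity))) hcp
  intro f hf
  obtain ⟨f', hf'meas, hff'⟩ : ∃ f' : Rn n → ℂ, StronglyMeasurable f' ∧ f =ᵐ[volume] f' :=
    ⟨hf.1.mk f, hf.1.stronglyMeasurable_mk, hf.1.ae_eq_mk⟩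
  have hconv : ∀ k : ℤ, convK (⇑φ) k f = convK (⇑φ) k f' := by
    intro k
    funext x
    exact integral_congr_ae (hff'.mono fun u hu => by simp only [hu])
  have hnt : ntMax (⇑φ) f = ntMax (⇑φ) f' := by
    funext x
    unfold ntMax
    refine iSup_congr fun t => iSup_congr fun _ => iSup_congr fun y => iSup_congr fun _ => ?_
    exact congrArg (fun z : ℂ => ((‖z‖₊ : ℝ≥0) : ℝ≥0∞))
      (integral_congr_ae (hff'.mono fun u hu => by simp only [hu]))
  simp only [hconv, hnt]
  -- measurability of the convolutions
  have hGsm : ∀ k : ℤ, StronglyMeasurable (convK (⇑φ) k f') := by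
    intro k
    have hker : Continuous fun q : Rn n × Rn n => Complex.ofReal (dilR (⇑φ) k (q.1 - q.2)) := by
      apply Complex.continuous_ofReal.comp
      show Continuous fun q : Rn n × Rn n => (2:ℝ)^(k * (n:ℤ)) * φ ((2:ℝ)^(k:ℤ) • (q.1 - q.2))
      exact continuous_const.mul
        (φ.continuous.comp (((continuous_fst.sub continuous_snd).const_smul ((2:ℝ)^(k:ℤ)))))
    have huncurry : StronglyMeasurable
        (Function.uncurry fun (x u : Rn n) => Complex.ofReal (dilR (⇑φ) k (x - u)) * f' u) := by
      apply StronglyMeasurable.mul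
      · exact hker.stronglyMeasurable
      · exact hf'meas.comp_measurable measurable_snd
    exact MeasureTheory.StronglyMeasurable.integral_prod_right huncurry
  have hGm : ∀ k : ℤ, Measurable fun x => ((‖convK (⇑φ) k f' x‖₊ : ℝ≥0) : ℝ≥0∞) :=
    fun k => measurable_coe_nnreal_ennreal.comp (hGsm k).measurable.nnnorm
  -- Step A : pointwise domination by the nontangential maximal function
  have hstepA : ∀ (k : ℤ) (x y : Rn n), dist y x ≤ (2:ℝ)^(-k) →
      ((‖convK (⇑φ) k f' x‖₊ : ℝ≥0) : ℝ≥0∞) ≤ ntMax (⇑φ) f' y := by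
    intro k x y hxy
    have ht : (0:ℝ) < (2:ℝ)^(-k) := by positivity
    have hker_eq : ∀ u : Rn n, ((((2:ℝ)^(-k)) ^ n)⁻¹ * φ ((((2:ℝ)^(-k)))⁻¹ • (x - u)))
        = dilR (⇑φ) k (x - u) := by
      intro u
      have e1 : (((2:ℝ)^(-k)) ^ n)⁻¹ = (2:ℝ)^(k * (n:ℤ)) := by
        rw [← zpow_natCast ((2:ℝ)^(-k)) n, ← zpow_mul, ← zpow_neg]
        congr 1
        ring
      have e2 : ((2:ℝ)^(-k))⁻¹ = (2:ℝ)^(k:ℤ) := by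
        rw [← zpow_neg, neg_neg]
      rw [e1, e2]
      rfl
    have hval : (∫ u, Complex.ofReal ((((2:ℝ)^(-k)) ^ n)⁻¹
          * φ ((((2:ℝ)^(-k)))⁻¹ • (x - u))) * f' u) = convK (⇑φ) k f' x := by
      show _ = ∫ u, Complex.ofReal (dilR (⇑φ) k (x - u)) * f' u
      congr 1
      funext u
      rw [hker_eq u]
    unfold ntMax
    refine le_iSup_of_le ((2:ℝ)^(-k)) (le_iSup_of_le ht (le_iSup_of_le x
      (le_iSup_of_le (by rw [← dist_eq_norm]; exact hxy) ?_)))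
    rw [hval]
  -- family of superlevel sets
  set Fs : ℤ → ℤ → Set (Rn n) := fun k j =>
    {x | lamE j < ((‖convK (⇑φ) k f' x‖₊ : ℝ≥0) : ℝ≥0∞)} with hFs
  have hFmeas : ∀ k j, MeasurableSet (Fs k j) := fun k j =>
    measurableSet_lt measurable_const (hGm k)
  set Es : ℤ → Set (Rn n) := fun j =>
    ⋃ k : ℤ, Metric.cthickening ((2:ℝ)^(-(k+1))) (Fs k j) with hEs
  have hEmeas : ∀ j, MeasurableSet (Es j) := fun j =>
    MeasurableSet.iUnion fun k => Metric.isClosed_cthickening.measurableSet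
  have hFE : ∀ (j k : ℤ), ∀ x ∈ Fs k j, Metric.closedBall x ((2:ℝ)^(-(k+1))) ⊆ Es j := by
    intro j k x hx y hy
    exact Set.mem_iUnion.2 ⟨k, Metric.mem_cthickening_of_dist_le y x _ _ hx
      (by rwa [Metric.mem_closedBall] at hy)⟩
  have hEsub : ∀ j : ℤ, ∀ y ∈ Es j, lamE j < ntMax (⇑φ) f' y := by
    intro j y hy
    obtain ⟨k, hk⟩ := Set.mem_iUnion.1 hy
    have h1 : EMetric.infEdist y (Fs k j) < ENNReal.ofReal ((2:ℝ)^(-k)) := by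
      refine lt_of_le_of_lt (Metric.mem_cthickening_iff.1 hk) ?_
      apply (ENNReal.ofReal_lt_ofReal_iff (by positivity)).2
      apply zpow_lt_zpow_right₀ one_lt_two
      omega
    obtain ⟨x, hxF, hdx⟩ := EMetric.infEdist_lt_iff.1 h1
    have hd : dist y x ≤ (2:ℝ)^(-k) := by
      rw [edist_dist] at hdx
      exact ((ENNReal.ofReal_lt_ofReal_iff_of_nonneg dist_nonneg).1 hdx).le
    exact lt_of_lt_of_le hxF (hstepA k x y hd)
  -- Whitney estimate for each level j
  have hWhit : ∀ j : ℤ, (∑' k : ℤ, ∫⁻ x in Fs k j, ENNReal.ofReal (μ k x)) ≤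
      ENNReal.ofReal (A' * 2^((n+1)*n)) * volume (Es j) :=
    fun j => whitney hn μ hA'1 hA' (fun k => Fs k j) (Es j) (hFE j)
  -- ae measurability of densities
  have hμae : ∀ k : ℤ, AEMeasurable (fun x => ENNReal.ofReal (μ k x)) volume := fun k =>
    ENNReal.measurable_ofReal.comp_aemeasurable (hμloc k).aestronglyMeasurable.aemeasurable
  have hGp : ∀ k : ℤ, Measurable fun x => ((‖convK (⇑φ) k f' x‖₊ : ℝ≥0) : ℝ≥0∞) ^ p :=
    fun k => ENNReal.continuous_rpow_const.measurable.comp (hGm k)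
  -- main chain
  have hk1 : ∀ k : ℤ, (∫⁻ x, ((‖convK (⇑φ) k f' x‖₊ : ℝ≥0) : ℝ≥0∞) ^ p
        * ENNReal.ofReal (μ k x)) ≤
      ENNReal.ofReal ((2:ℝ)^p) * ∑' j : ℤ, lamE j ^ p
        * ∫⁻ x in Fs k j, ENNReal.ofReal (μ k x) := by
    intro k
    have hpt : ∀ x : Rn n, ((‖convK (⇑φ) k f' x‖₊ : ℝ≥0) : ℝ≥0∞) ^ p * ENNReal.ofReal (μ k x)
        ≤ ENNReal.ofReal ((2:ℝ)^p) * ∑' j : ℤ,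
          (Fs k j).indicator (fun _ => lamE j ^ p) x * ENNReal.ofReal (μ k x) := by
      intro x
      have hup := rpow_le_tsum_levels hp ((‖convK (⇑φ) k f' x‖₊ : ℝ≥0) : ℝ≥0∞)
      have hieq : ∀ j : ℤ, (if lamE j < ((‖convK (⇑φ) k f' x‖₊ : ℝ≥0) : ℝ≥0∞)
          then lamE j ^ p else 0) = (Fs k j).indicator (fun _ => lamE j ^ p) x := by
        intro j
        by_cases h : lamE j < ((‖convK (⇑φ) k f' x‖₊ : ℝ≥0) : ℝ≥0∞)
        · rw [if_pos h, Set.indicator_of_mem (show x ∈ Fs k j from h)]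
        · rw [if_neg h, Set.indicator_of_notMem (show x ∉ Fs k j from h)]
      calc ((‖convK (⇑φ) k f' x‖₊ : ℝ≥0) : ℝ≥0∞) ^ p * ENNReal.ofReal (μ k x)
          ≤ (ENNReal.ofReal ((2:ℝ)^p) * ∑' j : ℤ,
              (Fs k j).indicator (fun _ => lamE j ^ p) x) * ENNReal.ofReal (μ k x) := by
            apply mul_le_mul_left
            calc ((‖convK (⇑φ) k f' x‖₊ : ℝ≥0) : ℝ≥0∞) ^ p
                ≤ ENNReal.ofReal ((2:ℝ)^p) * ∑' j : ℤ, (if lamE j <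
                    ((‖convK (⇑φ) k f' x‖₊ : ℝ≥0) : ℝ≥0∞) then lamE j ^ p else 0) := hup
              _ = _ := by rw [tsum_congr hieq]
        _ = ENNReal.ofReal ((2:ℝ)^p) * ∑' j : ℤ,
              (Fs k j).indicator (fun _ => lamE j ^ p) x * ENNReal.ofReal (μ k x) := by
            rw [mul_assoc, ENNReal.tsum_mul_right]
    calc (∫⁻ x, ((‖convK (⇑φ) k f' x‖₊ : ℝ≥0) : ℝ≥0∞) ^ p * ENNReal.ofReal (μ k x))
        ≤ ∫⁻ x, ENNReal.ofReal ((2:ℝ)^p) * ∑' j : ℤ,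
            (Fs k j).indicator (fun _ => lamE j ^ p) x * ENNReal.ofReal (μ k x) :=
          lintegral_mono hpt
      _ = ENNReal.ofReal ((2:ℝ)^p) * ∫⁻ x, ∑' j : ℤ,
            (Fs k j).indicator (fun _ => lamE j ^ p) x * ENNReal.ofReal (μ k x) :=
          lintegral_const_mul' _ _ ENNReal.ofReal_ne_top
      _ = ENNReal.ofReal ((2:ℝ)^p) * ∑' j : ℤ, ∫⁻ x,
            (Fs k j).indicator (fun _ => lamE j ^ p) x * ENNReal.ofReal (μ k x) := by
          congr 1
          exact lintegral_tsum fun j =>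
            ((measurable_const.indicator (hFmeas k j)).aemeasurable.mul (hμae k))
      _ = ENNReal.ofReal ((2:ℝ)^p) * ∑' j : ℤ, lamE j ^ p
            * ∫⁻ x in Fs k j, ENNReal.ofReal (μ k x) := by
          congr 1
          apply tsum_congr
          intro j
          have hind : ∀ x : Rn n, (Fs k j).indicator (fun _ => lamE j ^ p) x
              * ENNReal.ofReal (μ k x)
              = (Fs k j).indicator (fun x => lamE j ^ p * ENNReal.ofReal (μ k x)) x := by
            intro x
            by_cases h : x ∈ Fs k j
            · rw [Set.indicator_of_mem h, Set.indicator_of_mem h]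
            · rw [Set.indicator_of_notMem h, Set.indicator_of_notMem h, zero_mul]
          calc (∫⁻ x, (Fs k j).indicator (fun _ => lamE j ^ p) x * ENNReal.ofReal (μ k x))
              = ∫⁻ x, (Fs k j).indicator (fun x => lamE j ^ p * ENNReal.ofReal (μ k x)) x := by
                apply lintegral_congr
                exact hind
            _ = ∫⁻ x in Fs k j, lamE j ^ p * ENNReal.ofReal (μ k x) :=
                lintegral_indicator (hFmeas k j) _
            _ = lamE j ^ p * ∫⁻ x in Fs k j, ENNReal.ofReal (μ k x) :=
                lintegral_const_mul' _ _ (lamE_rpow_ne_top j p)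
  calc (∫⁻ x, ∑' k : ℤ, ((‖convK (⇑φ) k f' x‖₊ : ℝ≥0) : ℝ≥0∞) ^ p * ENNReal.ofReal (μ k x))
      = ∑' k : ℤ, ∫⁻ x, ((‖convK (⇑φ) k f' x‖₊ : ℝ≥0) : ℝ≥0∞) ^ p * ENNReal.ofReal (μ k x) :=
        lintegral_tsum fun k => ((hGp k).aemeasurable.mul (hμae k))
    _ ≤ ∑' k : ℤ, ENNReal.ofReal ((2:ℝ)^p) * ∑' j : ℤ, lamE j ^ p
          * ∫⁻ x in Fs k j, ENNReal.ofReal (μ k x) := ENNReal.tsum_le_tsum hk1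
    _ = ENNReal.ofReal ((2:ℝ)^p) * ∑' k : ℤ, ∑' j : ℤ, lamE j ^ p
          * ∫⁻ x in Fs k j, ENNReal.ofReal (μ k x) := ENNReal.tsum_mul_left
    _ = ENNReal.ofReal ((2:ℝ)^p) * ∑' j : ℤ, lamE j ^ p
          * ∑' k : ℤ, ∫⁻ x in Fs k j, ENNReal.ofReal (μ k x) := by
        rw [ENNReal.tsum_comm]
        congr 1
        exact tsum_congr fun j => ENNReal.tsum_mul_left
    _ ≤ ENNReal.ofReal ((2:ℝ)^p) * ∑' j : ℤ, lamE j ^ p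
          * (ENNReal.ofReal (A' * 2^((n+1)*n)) * volume (Es j)) := by
        apply mul_le_mul_right
        exact ENNReal.tsum_le_tsum fun j => mul_le_mul_right (hWhit j) _
    _ = ENNReal.ofReal ((2:ℝ)^p) * (ENNReal.ofReal (A' * 2^((n+1)*n))
          * ∑' j : ℤ, lamE j ^ p * volume (Es j)) := by
        congr 1
        rw [← ENNReal.tsum_mul_left]
        exact tsum_congr fun j => by ring
    _ ≤ ENNReal.ofReal ((2:ℝ)^p) * (ENNReal.ofReal (A' * 2^((n+1)*n))
          * (ENNReal.ofReal cp * ∫⁻ x, ntMax (⇑φ) f' x ^ p)) := by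
        apply mul_le_mul_right
        apply mul_le_mul_right
        calc (∑' j : ℤ, lamE j ^ p * volume (Es j))
            = ∑' j : ℤ, ∫⁻ x, (Es j).indicator (fun _ => lamE j ^ p) x := by
              apply tsum_congr
              intro j
              rw [lintegral_indicator (hEmeas j), setLIntegral_const]
          _ = ∫⁻ x, ∑' j : ℤ, (Es j).indicator (fun _ => lamE j ^ p) x :=
              (lintegral_tsum fun j =>
                (measurable_const.indicator (hEmeas j)).aemeasurable).symm
          _ ≤ ∫⁻ x, ENNReal.ofReal cp * ntMax (⇑φ) f' x ^ p := by
              apply lintegral_mono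
              intro y
              calc (∑' j : ℤ, (Es j).indicator (fun _ => lamE j ^ p) y)
                  ≤ ∑' j : ℤ, (if lamE j < ntMax (⇑φ) f' y then lamE j ^ p else 0) := by
                    apply ENNReal.tsum_le_tsum
                    intro j
                    by_cases h : y ∈ Es j
                    · rw [Set.indicator_of_mem h, if_pos (hEsub j y h)]
                    · rw [Set.indicator_of_notMem h]
                      exact zero_le
                _ ≤ ENNReal.ofReal cp * ntMax (⇑φ) f' y ^ p := tsum_levels_le_rpow hp _
          _ = ENNReal.ofReal cp * ∫⁻ x, ntMax (⇑φ) f' x ^ p :=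
              lintegral_const_mul' _ _ ENNReal.ofReal_ne_top
    _ = ENNReal.ofReal ((2:ℝ)^p * (A' * 2^((n+1)*n)) * cp) * ∫⁻ x, ntMax (⇑φ) f' x ^ p := by
        rw [ENNReal.ofReal_mul (mul_nonneg (two_rpow_pos p).le (mul_nonneg (by linarith) (by positivity))),
          ENNReal.ofReal_mul (two_rpow_pos p).le]
        ring


end HL
end
end

section
/- Let M≥0 be an integer, let ψ∈C_c^∞(ℝ^n) satisfy ∫ψ(x)x^α dx=0 for all multi-indices |α|≤M+1, and let s∈ℝ with −M≤s≤M. Then there is a constant C such that for every ξ∈ℝ^n with ξ≠0: Σ_{k∈ℤ} (2^{-k}|ξ|)^s |ψ̂(2^{-k}ξ)| ≤ C, where ψ̂ denotes the Fourier transform of ψ. (Consequently the convolution operator T_V f = Σ_k V_k*f with V̂(ξ)=|ξ|^s ψ̂(ξ) has a uniformly bounded Fourier multiplier.) -/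
noncomputable section

open MeasureTheory Filter Topology SchwartzMap Metric
open scoped ENNReal NNReal

namespace HL

variable {n : ℕ}

open Finset in
private lemma expTaylor (N : ℕ) (t : ℝ) :
    ‖Complex.exp (t * Complex.I) - ∑ m ∈ Finset.range N, (t * Complex.I) ^ m / m.factorial‖
      ≤ (N + 1) * |t| ^ N := by
  have habs : ‖t * Complex.I‖ = |t| := by simp
  have hnorm : ∀ m : ℕ, ‖(t * Complex.I) ^ m / (m.factorial : ℂ)‖ = |t| ^ m / m.factorial := by
    intro m
    rw [norm_div, norm_pow]
    simp [habs]
  rcases le_or_gt (|t|) 1 with h1 | h1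
  · rcases Nat.eq_zero_or_pos N with rfl | hN
    · simp [Complex.norm_exp]
    · have hb := Complex.exp_bound (x := t * Complex.I) (by rw [habs]; exact h1) hN
      rw [habs] at hb
      refine hb.trans ?_
      have h2 : ((N.factorial : ℝ) * N)⁻¹ ≤ 1 := by
        rw [inv_le_one_iff₀]
        right
        have : (1:ℕ) ≤ N.factorial * N := Nat.one_le_iff_ne_zero.2
          (Nat.mul_ne_zero (Nat.factorial_ne_zero N) (Nat.pos_iff_ne_zero.1 hN))
        exact_mod_cast this
      calc |t| ^ N * ((N.succ : ℝ) * ((N.factorial : ℝ) * N)⁻¹)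
          ≤ |t| ^ N * ((N.succ : ℝ) * 1) := by
            gcongr
        _ = ((N:ℝ) + 1) * |t| ^ N := by push_cast; ring
  · have hexp1 : ‖Complex.exp (t * Complex.I)‖ = 1 := by
      simp [Complex.norm_exp]
    have h1N : (1:ℝ) ≤ |t| ^ N := one_le_pow₀ h1.le
    have hsum : ‖∑ m ∈ Finset.range N, (t * Complex.I) ^ m / (m.factorial : ℂ)‖
        ≤ (N : ℝ) * |t| ^ N := by
      calc ‖∑ m ∈ Finset.range N, (t * Complex.I) ^ m / (m.factorial : ℂ)‖
          ≤ ∑ m ∈ Finset.range N, ‖(t * Complex.I) ^ m / (m.factorial : ℂ)‖ :=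
            norm_sum_le _ _
        _ ≤ ∑ _m ∈ Finset.range N, |t| ^ N := by
            apply Finset.sum_le_sum
            intro m hm
            rw [hnorm]
            calc |t| ^ m / m.factorial ≤ |t| ^ m :=
                  div_le_self (by positivity) (by exact_mod_cast m.factorial_pos)
              _ ≤ |t| ^ N := pow_le_pow_right₀ h1.le (Finset.mem_range.1 hm).le
        _ = (N : ℝ) * |t| ^ N := by rw [Finset.sum_const, Finset.card_range, nsmul_eq_mul]
    calc ‖Complex.exp (t * Complex.I) - ∑ m ∈ Finset.range N, (t * Complex.I) ^ m / m.factorial‖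
        ≤ ‖Complex.exp (t * Complex.I)‖
          + ‖∑ m ∈ Finset.range N, (t * Complex.I) ^ m / (m.factorial : ℂ)‖ := norm_sub_le _ _
      _ ≤ 1 + (N : ℝ) * |t| ^ N := by rw [hexp1]; gcongr
      _ ≤ |t| ^ N + (N : ℝ) * |t| ^ N := by gcongr
      _ = ((N:ℝ) + 1) * |t| ^ N := by ring

open scoped RealInnerProductSpace

private lemma monoCont {n : ℕ} (k : Fin n → ℕ) : Continuous fun x : Rn n => mono k x := by
  unfold mono
  exact continuous_finset_prod _ fun i _ => ((EuclideanSpace.proj (𝕜 := ℝ) i).continuous).pow _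

private lemma momzero {n : ℕ} (M : ℕ) (ψ : Rn n → ℂ) (hsm : Continuous ψ)
    (hcs : HasCompactSupport ψ)
    (hmom : ∀ α : Fin n → ℕ, mord α ≤ M + 1 → (∫ x, ψ x * Complex.ofReal (mono α x)) = 0)
    (ξ : Rn n) (m : ℕ) (hm : m ≤ M + 1) :
    (∫ x : Rn n, ψ x * ((⟪x, ξ⟫ : ℝ) : ℂ) ^ m) = 0 := by
  have hker : ∀ x : Rn n, ψ x * ((⟪x, ξ⟫ : ℝ) : ℂ) ^ m
      = ∑ k ∈ Finset.piAntidiag Finset.univ m,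
          ((Nat.multinomial Finset.univ k : ℂ) * Complex.ofReal (mono k ξ)) *
            (ψ x * Complex.ofReal (mono k x)) := by
    intro x
    have hinner : ((⟪x, ξ⟫ : ℝ) : ℂ) = ∑ i, ((x i : ℂ) * (ξ i : ℂ)) := by
      rw [PiLp.inner_apply]
      push_cast
      simp [RCLike.inner_apply, conj_trivial]
      exact Finset.sum_congr rfl fun i _ => mul_comm _ _
    rw [hinner, Finset.sum_pow_eq_sum_piAntidiag, Finset.mul_sum]
    refine Finset.sum_congr rfl fun k hk => ?_
    have hprod : ∏ i, ((x i : ℂ) * (ξ i : ℂ)) ^ k i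
        = Complex.ofReal (mono k x) * Complex.ofReal (mono k ξ) := by
      unfold mono
      push_cast
      rw [← Finset.prod_mul_distrib]
      exact Finset.prod_congr rfl fun i _ => (mul_pow _ _ _)
    rw [hprod]
    ring
  simp_rw [hker]
  rw [MeasureTheory.integral_finset_sum]
  · refine Finset.sum_eq_zero fun k hk => ?_
    have hk2 := (Finset.mem_piAntidiag.1 hk).1
    have hk' : mord k ≤ M + 1 := by unfold mord; rw [show (∑ i, k i) = Finset.univ.sum k from rfl, hk2]; omega
    rw [MeasureTheory.integral_const_mul, hmom k hk', mul_zero]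
  · intro k _
    refine ((hsm.mul (Complex.continuous_ofReal.comp (monoCont k))).integrable_of_hasCompactSupport
      hcs.mul_right).const_mul _

open MeasureTheory in
private lemma smallBound {n : ℕ} (M : ℕ) (ψ : Rn n → ℂ) (hsm : Continuous ψ)
    (hcs : HasCompactSupport ψ)
    (hmom : ∀ α : Fin n → ℕ, mord α ≤ M + 1 → (∫ x, ψ x * Complex.ofReal (mono α x)) = 0) :
    ∃ C₂ : ℝ, 0 ≤ C₂ ∧ ∀ ξ : Rn n,
      ‖FourierTransform.fourier ψ ξ‖ ≤ C₂ * ‖ξ‖ ^ (M + 2) := by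
  set N := M + 2 with hN
  set J := ∫ x : Rn n, ‖ψ x‖ * ‖x‖ ^ N with hJ
  have hJint : Integrable (fun x : Rn n => ‖ψ x‖ * ‖x‖ ^ N) :=
    (hsm.norm.mul (continuous_norm.pow N)).integrable_of_hasCompactSupport hcs.norm.mul_right
  have hJ0 : 0 ≤ J := integral_nonneg fun x => by positivity
  have hπ : (0:ℝ) < Real.pi := Real.pi_pos
  refine ⟨((N:ℝ) + 1) * (2 * Real.pi) ^ N * J, by positivity, fun ξ => ?_⟩
  set c : Rn n → ℝ := fun x => -2 * Real.pi * ⟪x, ξ⟫ with hc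
  have hcCont : Continuous c :=
    continuous_const.mul (continuous_id.inner continuous_const)
  set S : Rn n → ℂ := fun x => ∑ m ∈ Finset.range N, ((c x : ℂ) * Complex.I) ^ m / m.factorial
    with hS
  have hSCont : Continuous S := by
    refine continuous_finset_sum _ fun m _ => ?_
    exact (((Complex.continuous_ofReal.comp hcCont).mul continuous_const).pow m).div_const _
  have hECont : Continuous fun x : Rn n => Complex.exp ((c x : ℂ) * Complex.I) :=
    Complex.continuous_exp.comp ((Complex.continuous_ofReal.comp hcCont).mul continuous_const)
  have hAint : Integrable (fun x : Rn n => Complex.exp ((c x : ℂ) * Complex.I) * ψ x) :=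
    (hECont.mul hsm).integrable_of_hasCompactSupport hcs.mul_left
  have hSint : Integrable (fun x : Rn n => S x * ψ x) :=
    (hSCont.mul hsm).integrable_of_hasCompactSupport hcs.mul_left
  have hSzero : (∫ x : Rn n, S x * ψ x) = 0 := by
    have : ∀ x : Rn n, S x * ψ x = ∑ m ∈ Finset.range N,
        ((-2 * Real.pi : ℂ) ^ m * Complex.I ^ m / m.factorial) *
          (ψ x * ((⟪x, ξ⟫ : ℝ) : ℂ) ^ m) := by
      intro x
      rw [hS, Finset.sum_mul]
      refine Finset.sum_congr rfl fun m _ => ?_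
      have : ((c x : ℝ) : ℂ) = (-2 * Real.pi : ℂ) * ((⟪x, ξ⟫ : ℝ) : ℂ) := by
        rw [hc]; push_cast; ring
      rw [this]
      ring
    simp_rw [this]
    rw [integral_finset_sum]
    · refine Finset.sum_eq_zero fun m hm => ?_
      rw [integral_const_mul, momzero M ψ hsm hcs hmom ξ m (by have := Finset.mem_range.1 hm; omega), mul_zero]
    · intro m _
      refine (Integrable.const_mul ?_ _)
      exact (hsm.mul (((Complex.continuous_ofReal.comp
        (continuous_id.inner continuous_const)).pow m))).integrable_of_hasCompactSupport
        hcs.mul_right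
  have key : FourierTransform.fourier ψ ξ
      = ∫ x : Rn n, (Complex.exp ((c x : ℂ) * Complex.I) - S x) * ψ x := by
    rw [Real.fourier_eq']
    have h1 : (∫ v : Rn n, Complex.exp (((-2 * Real.pi * ⟪v, ξ⟫ : ℝ) : ℂ) * Complex.I) • ψ v)
        = ∫ x : Rn n, Complex.exp ((c x : ℂ) * Complex.I) * ψ x := by
      simp [hc, smul_eq_mul]
    rw [h1]
    have h3 : (∫ x : Rn n, (Complex.exp ((c x : ℂ) * Complex.I) - S x) * ψ x)
        = (∫ x : Rn n, Complex.exp ((c x : ℂ) * Complex.I) * ψ x) - ∫ x : Rn n, S x * ψ x := by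
      rw [← integral_sub hAint hSint]
      congr 1
      ext x
      ring
    rw [h3, hSzero, sub_zero]
  rw [key]
  have hbound : ∀ x : Rn n, ‖(Complex.exp ((c x : ℂ) * Complex.I) - S x) * ψ x‖
      ≤ (((N:ℝ) + 1) * (2 * Real.pi) ^ N * ‖ξ‖ ^ N) * (‖ψ x‖ * ‖x‖ ^ N) := by
    intro x
    rw [norm_mul]
    have h3 : ‖Complex.exp ((c x : ℂ) * Complex.I) - S x‖ ≤ ((N:ℝ) + 1) * |c x| ^ N :=
      expTaylor N (c x)
    have h4 : |c x| ≤ 2 * Real.pi * (‖x‖ * ‖ξ‖) := by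
      rw [hc]
      calc |(-2 * Real.pi * ⟪x, ξ⟫ : ℝ)| = 2 * Real.pi * |⟪x, ξ⟫| := by
            rw [abs_mul]
            congr 1
            rw [abs_of_nonpos (by nlinarith)]
            ring
        _ ≤ 2 * Real.pi * (‖x‖ * ‖ξ‖) := by
            have := abs_real_inner_le_norm x ξ
            nlinarith
    calc ‖Complex.exp ((c x : ℂ) * Complex.I) - S x‖ * ‖ψ x‖
        ≤ (((N:ℝ) + 1) * |c x| ^ N) * ‖ψ x‖ := by
          apply mul_le_mul_of_nonneg_right h3 (norm_nonneg _)
      _ ≤ (((N:ℝ) + 1) * (2 * Real.pi * (‖x‖ * ‖ξ‖)) ^ N) * ‖ψ x‖ := by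
          have h5 : |c x| ^ N ≤ (2 * Real.pi * (‖x‖ * ‖ξ‖)) ^ N :=
            pow_le_pow_left₀ (abs_nonneg _) h4 N
          apply mul_le_mul_of_nonneg_right (by nlinarith [pow_nonneg (abs_nonneg (c x)) N])
            (norm_nonneg _)
      _ = (((N:ℝ) + 1) * (2 * Real.pi) ^ N * ‖ξ‖ ^ N) * (‖ψ x‖ * ‖x‖ ^ N) := by
          rw [mul_pow, mul_pow]
          ring
  have hfin := norm_integral_le_of_norm_le
    (hJint.const_mul (((N:ℝ) + 1) * (2 * Real.pi) ^ N * ‖ξ‖ ^ N))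
    (Filter.Eventually.of_forall hbound)
  rw [integral_const_mul] at hfin
  calc ‖∫ x : Rn n, (Complex.exp ((c x : ℂ) * Complex.I) - S x) * ψ x‖
      ≤ (((N:ℝ) + 1) * (2 * Real.pi) ^ N * ‖ξ‖ ^ N) * J := hfin
    _ = ((N:ℝ) + 1) * (2 * Real.pi) ^ N * J * ‖ξ‖ ^ N := by ring

private lemma bigBound {n : ℕ} (M : ℕ) (ψ : Rn n → ℂ) (hsm : ContDiff ℝ (⊤ : ℕ∞) ψ)
    (hcs : HasCompactSupport ψ) :
    ∃ C₁ : ℝ, 0 ≤ C₁ ∧ ∀ ξ : Rn n,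
      ‖ξ‖ ^ (M + 1) * ‖FourierTransform.fourier ψ ξ‖ ≤ C₁ := by
  have hφ : ∃ φ : SchwartzMap (Rn n) ℂ, ⇑φ = ψ := by
    refine ⟨⟨ψ, hsm.of_le (by simp), fun k m => ?_⟩, rfl⟩
    obtain ⟨C, hC⟩ := Continuous.bounded_above_of_compact_support
      ((continuous_norm.pow k).mul (hsm.continuous_iteratedFDeriv (by exact_mod_cast le_top)).norm)
      ((hcs.iteratedFDeriv (𝕜 := ℝ) (n := m)).norm.mul_left)
    refine ⟨C, fun x => (le_abs_self _).trans ?_⟩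
    have h := hC x
    rw [Real.norm_eq_abs] at h
    exact h
  obtain ⟨φ, hφ⟩ := hφ
  obtain ⟨C₁, hpos, hC₁⟩ := (SchwartzMap.fourierTransformCLM ℂ φ).decay (M + 1) 0
  refine ⟨C₁, hpos.le, fun ξ => ?_⟩
  have heq : FourierTransform.fourier ψ ξ = (SchwartzMap.fourierTransformCLM ℂ φ) ξ := by
    rw [SchwartzMap.fourierTransformCLM_apply, SchwartzMap.fourier_coe, hφ]
  rw [heq]
  simpa [norm_iteratedFDeriv_zero] using hC₁ ξ


theorem stmt14 (n : ℕ) (hn : 1 ≤ n) (M : ℕ) (ψ : Rn n → ℂ)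
    (hsm : ContDiff ℝ (⊤ : ℕ∞) ψ) (hcs : HasCompactSupport ψ)
    (hmom : ∀ α : Fin n → ℕ, mord α ≤ M + 1 → (∫ x, ψ x * Complex.ofReal (mono α x)) = 0)
    (s : ℝ) (hs1 : -(M:ℝ) ≤ s) (hs2 : s ≤ M) :
    ∃ C : ℝ, ∀ ξ : Rn n, ξ ≠ 0 →
      (∑' k : ℤ, ENNReal.ofReal (((2:ℝ) ^ (-k) * ‖ξ‖) ^ s *
        ‖VectorFourier.fourierIntegral Real.fourierChar volume (innerₗ (Rn n)) ψ ((2:ℝ) ^ (-k) • ξ)‖)) ≤ ENNReal.ofReal C := by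
  obtain ⟨C₁, hC₁0, hC₁⟩ := bigBound M ψ hsm hcs
  obtain ⟨C₂, hC₂0, hC₂⟩ := smallBound M ψ hsm.continuous hcs hmom
  set C₃ : ℝ := C₂ + 2 * C₁ with hC₃
  have hC₃0 : 0 ≤ C₃ := by positivity
  refine ⟨C₃ * 4, fun ξ hξ => ?_⟩
  have hr : 0 < ‖ξ‖ := norm_pos_iff.2 hξ
  set r : ℝ := ‖ξ‖ with hrdef
  set k₀ : ℤ := ⌈Real.logb 2 r⌉ with hk₀
  have hrle : r ≤ (2:ℝ) ^ k₀ := by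
    have h := Int.le_ceil (Real.logb 2 r)
    calc r = (2:ℝ) ^ (Real.logb 2 r) := (Real.rpow_logb two_pos (by norm_num) hr).symm
      _ ≤ (2:ℝ) ^ ((k₀ : ℤ) : ℝ) := by
          apply Real.rpow_le_rpow_of_exponent_le one_le_two
          rw [hk₀]
          exact_mod_cast h
      _ = (2:ℝ) ^ k₀ := Real.rpow_intCast 2 k₀
  have hrgt : (2:ℝ) ^ (k₀ - 1) < r := by
    have h := Int.ceil_lt_add_one (Real.logb 2 r)
    have h' : ((k₀ - 1 : ℤ) : ℝ) < Real.logb 2 r := by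
      have h2 : ((k₀ : ℤ) : ℝ) < Real.logb 2 r + 1 := by
        rw [hk₀]
        exact_mod_cast h
      push_cast
      push_cast at h2
      linarith
    calc (2:ℝ) ^ (k₀ - 1) = (2:ℝ) ^ ((k₀ - 1 : ℤ) : ℝ) := (Real.rpow_intCast 2 _).symm
      _ < (2:ℝ) ^ (Real.logb 2 r) := Real.rpow_lt_rpow_of_exponent_lt one_lt_two h'
      _ = r := Real.rpow_logb two_pos (by norm_num) hr
  have hterm : ∀ k : ℤ, ((2:ℝ) ^ (-k) * r) ^ s * ‖FourierTransform.fourier ψ ((2:ℝ) ^ (-k) • ξ)‖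
      ≤ C₃ * (1/2 : ℝ) ^ (k - k₀).natAbs := by
    intro k
    have hz : (0:ℝ) < (2:ℝ) ^ (-k) := zpow_pos two_pos _
    set t : ℝ := (2:ℝ) ^ (-k) * r with htdef
    have ht0 : 0 < t := mul_pos hz hr
    have hw : ‖(2:ℝ) ^ (-k) • ξ‖ = t := by
      rw [norm_smul, Real.norm_eq_abs, abs_of_pos hz, htdef, hrdef]
    have hts0 : 0 ≤ t ^ s := Real.rpow_nonneg ht0.le s
    rcases le_or_gt k₀ k with hk | hk
    · -- small frequency: t ≤ 1
      have hq : (1/2 : ℝ) ^ (k - k₀).natAbs = (2:ℝ) ^ (k₀ - k) := by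
        have hj : ((k - k₀).natAbs : ℤ) = k - k₀ := by omega
        rw [one_div, inv_pow, ← zpow_natCast, hj, ← zpow_neg]
        congr 1
        omega
      have ht1 : t ≤ (2:ℝ) ^ (k₀ - k) := by
        calc t ≤ (2:ℝ) ^ (-k) * (2:ℝ) ^ k₀ := mul_le_mul_of_nonneg_left hrle hz.le
          _ = (2:ℝ) ^ (k₀ - k) := by
              rw [← zpow_add₀ (two_ne_zero)]
              congr 1
              omega
      have ht1' : t ≤ 1 := by
        refine ht1.trans ?_
        calc (2:ℝ) ^ (k₀ - k) ≤ (2:ℝ) ^ (0:ℤ) := by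
              apply zpow_le_zpow_right₀ one_le_two
              omega
          _ = 1 := zpow_zero 2
      calc t ^ s * ‖FourierTransform.fourier ψ ((2:ℝ) ^ (-k) • ξ)‖
          ≤ t ^ s * (C₂ * t ^ (M + 2)) := by
            refine mul_le_mul_of_nonneg_left ?_ hts0
            have h5 := hC₂ ((2:ℝ) ^ (-k) • ξ)
            rwa [hw] at h5
        _ = C₂ * t ^ (s + (M + 2 : ℕ)) := by
            rw [← Real.rpow_natCast t (M + 2), Real.rpow_add ht0]
            ring
        _ ≤ C₂ * t ^ (1:ℝ) := by
            refine mul_le_mul_of_nonneg_left ?_ hC₂0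
            apply Real.rpow_le_rpow_of_exponent_ge ht0 ht1'
            push_cast
            linarith
        _ = C₂ * t := by rw [Real.rpow_one]
        _ ≤ C₂ * (2:ℝ) ^ (k₀ - k) := mul_le_mul_of_nonneg_left ht1 hC₂0
        _ ≤ C₃ * (1/2 : ℝ) ^ (k - k₀).natAbs := by
            rw [hq]
            have hp : (0:ℝ) < (2:ℝ) ^ (k₀ - k) := zpow_pos two_pos _
            nlinarith
    · -- large frequency: t ≥ 1
      have hq : (1/2 : ℝ) ^ (k - k₀).natAbs = (2:ℝ) ^ (k - k₀) := by
        have hj : ((k - k₀).natAbs : ℤ) = k₀ - k := by omega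
        rw [one_div, inv_pow, ← zpow_natCast, hj, ← zpow_neg]
        congr 1
        omega
      have ht1 : (2:ℝ) ^ (k₀ - k - 1) < t := by
        calc (2:ℝ) ^ (k₀ - k - 1) = (2:ℝ) ^ (-k) * (2:ℝ) ^ (k₀ - 1) := by
              rw [← zpow_add₀ (two_ne_zero)]
              congr 1
              omega
          _ < t := by
              rw [htdef]
              exact mul_lt_mul_of_pos_left hrgt hz
      have ht2 : (1:ℝ) ≤ t := by
        refine le_of_lt (lt_of_le_of_lt ?_ ht1)
        calc (1:ℝ) = (2:ℝ) ^ (0:ℤ) := (zpow_zero 2).symm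
          _ ≤ (2:ℝ) ^ (k₀ - k - 1) := by
              apply zpow_le_zpow_right₀ one_le_two
              omega
      have hFT : ‖FourierTransform.fourier ψ ((2:ℝ) ^ (-k) • ξ)‖ ≤ C₁ / t ^ (M + 1) := by
        rw [le_div_iff₀ (by positivity)]
        have h5 := hC₁ ((2:ℝ) ^ (-k) • ξ)
        rw [hw] at h5
        linarith [h5]
      calc t ^ s * ‖FourierTransform.fourier ψ ((2:ℝ) ^ (-k) • ξ)‖
          ≤ t ^ s * (C₁ / t ^ (M + 1)) := mul_le_mul_of_nonneg_left hFT hts0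
        _ = C₁ * t ^ (s - (M + 1 : ℕ)) := by
            rw [← Real.rpow_natCast t (M + 1), Real.rpow_sub ht0]
            ring
        _ ≤ C₁ * t ^ (-1 : ℝ) := by
            refine mul_le_mul_of_nonneg_left ?_ hC₁0
            apply Real.rpow_le_rpow_of_exponent_le ht2
            push_cast
            linarith
        _ = C₁ / t := by rw [Real.rpow_neg_one, div_eq_mul_inv]
        _ ≤ C₁ / (2:ℝ) ^ (k₀ - k - 1) := by
            apply div_le_div_of_nonneg_left hC₁0 (zpow_pos two_pos _) ht1.le
        _ = 2 * C₁ * (2:ℝ) ^ (k - k₀) := by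
            rw [div_eq_mul_inv, ← zpow_neg, show -(k₀ - k - 1) = (k - k₀) + 1 by ring,
              zpow_add₀ (two_ne_zero : (2:ℝ) ≠ 0), zpow_one]
            ring
        _ ≤ C₃ * (1/2 : ℝ) ^ (k - k₀).natAbs := by
            rw [hq]
            have hp : (0:ℝ) < (2:ℝ) ^ (k - k₀) := zpow_pos two_pos _
            nlinarith
  have hq2 : ENNReal.ofReal (1/2 : ℝ) = 2⁻¹ := by
    rw [one_div, ENNReal.ofReal_inv_of_pos two_pos, ENNReal.ofReal_ofNat]
  have hgeo : (∑' j : ℕ, (2⁻¹ : ℝ≥0∞) ^ j) = 2 := by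
    rw [ENNReal.tsum_geometric, ENNReal.one_sub_inv_two, inv_inv]
  have hhalf : (2⁻¹ : ℝ≥0∞) ≤ 1 := ENNReal.inv_le_one.2 one_le_two
  calc (∑' k : ℤ, ENNReal.ofReal (((2:ℝ) ^ (-k) * ‖ξ‖) ^ s *
        ‖FourierTransform.fourier ψ ((2:ℝ) ^ (-k) • ξ)‖))
      ≤ ∑' k : ℤ, ENNReal.ofReal (C₃ * (1/2 : ℝ) ^ (k - k₀).natAbs) :=
        ENNReal.tsum_le_tsum fun k => ENNReal.ofReal_le_ofReal (hterm k)
    _ = ∑' k : ℤ, ENNReal.ofReal C₃ * (2⁻¹ : ℝ≥0∞) ^ (k - k₀).natAbs := by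
        congr 1
        funext k
        rw [ENNReal.ofReal_mul hC₃0, ENNReal.ofReal_pow (by norm_num : (0:ℝ) ≤ 1/2), hq2]
    _ = ∑' m : ℤ, ENNReal.ofReal C₃ * (2⁻¹ : ℝ≥0∞) ^ m.natAbs :=
        (Equiv.subRight k₀).tsum_eq fun m => ENNReal.ofReal C₃ * (2⁻¹ : ℝ≥0∞) ^ m.natAbs
    _ = (∑' j : ℕ, ENNReal.ofReal C₃ * (2⁻¹ : ℝ≥0∞) ^ ((j : ℤ)).natAbs)
        + ∑' j : ℕ, ENNReal.ofReal C₃ * (2⁻¹ : ℝ≥0∞) ^ ((-((j : ℤ) + 1))).natAbs :=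
        tsum_of_nat_of_neg_add_one ENNReal.summable ENNReal.summable
    _ ≤ (∑' j : ℕ, ENNReal.ofReal C₃ * (2⁻¹ : ℝ≥0∞) ^ j)
        + ∑' j : ℕ, ENNReal.ofReal C₃ * (2⁻¹ : ℝ≥0∞) ^ j := by
        refine add_le_add (ENNReal.tsum_le_tsum fun j => ?_) (ENNReal.tsum_le_tsum fun j => ?_)
        · simp
        · have hj : ((-((j : ℤ) + 1))).natAbs = j + 1 := by omega
          rw [hj, pow_succ]
          exact mul_le_mul_right (mul_le_of_le_one_right zero_le hhalf) _
    _ = ENNReal.ofReal C₃ * 2 + ENNReal.ofReal C₃ * 2 := by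
        rw [ENNReal.tsum_mul_left, hgeo]
    _ ≤ ENNReal.ofReal (C₃ * 4) := by
        rw [ENNReal.ofReal_mul hC₃0]
        rw [show ENNReal.ofReal (4:ℝ) = 4 from by norm_num]
        have h4 : (2:ℝ≥0∞) + 2 = 4 := by norm_num
        calc ENNReal.ofReal C₃ * 2 + ENNReal.ofReal C₃ * 2
            = ENNReal.ofReal C₃ * 4 := by rw [← mul_add, h4]
          _ ≤ ENNReal.ofReal C₃ * 4 := le_rfl


end HL
end
end
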